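/- arXiv:2301.09796 — 10 statements merged into one kernel-verified Lean document; each statement's English description precedes it below -/
import Mathlib

section
/- Fix integers q ≥ 2, e ≥ 1 and set P = q^e. For every integer r ≥ 1, let M be the (r+1)×(r+1) matrix over ℚ, indexed by 0 ≤ i,j ≤ r, whose (i,j)-entry is: P(q−1) if (i,j) = (0,0) or (i,j) = (r,r); −(q−1) if (i,j) = (1,0) or (i,j) = (r−1,r); P^{min(j,r−j)−1}(P²+1) if 1 ≤ i = j ≤ r−1; −P^{min(j,r−j)} if |i−j| = 1 and j ∉ {0,r}; and 0 otherwise. Then M·Λ(r) = Λ(r)·M = (P^{r+1} − P^{r−1})(q−1) times the identity matrix; in particular Λ(r) is invertible over ℚ and Λ(r)^{−1} = M / ((P^{r+1} − P^{r−1})(q−1)). -/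
/-- The transpose of the matrix `Λ(r)`: for `0 ≤ i, j ≤ r`, the `(i,j)`-entry of `Λ(r)ᵀ`
is `P^(r-i)` if `j = 0`, `P^i` if `j = r`, and `P^(r - min(j, r-j) - |i-j|) * (q-1)`
for `1 ≤ j ≤ r-1`, where `P = q^e`. -/
def lambdaT (q e r : ℕ) : Matrix (Fin (r + 1)) (Fin (r + 1)) ℚ := fun i j =>
  if (j : ℕ) = 0 then ((q : ℚ) ^ e) ^ (r - (i : ℕ))
  else if (j : ℕ) = r then ((q : ℚ) ^ e) ^ (i : ℕ)
  else ((q : ℚ) ^ e) ^ (r - (min (j : ℕ) (r - (j : ℕ)) + Nat.dist (i : ℕ) (j : ℕ))) *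
    ((q : ℚ) - 1)

/-- The matrix `Λ(r)`. -/
def lambdaMat (q e r : ℕ) : Matrix (Fin (r + 1)) (Fin (r + 1)) ℚ := Matrix.transpose (lambdaT q e r)

/-- The claimed numerator matrix `M` of `Λ(r)⁻¹`, i.e.
`M = (P^(r+1) - P^(r-1))(q-1) · Λ(r)⁻¹`, with `P = q^e`. -/
def lambdaInvNum (q e r : ℕ) : Matrix (Fin (r + 1)) (Fin (r + 1)) ℚ := fun i j =>
  if ((i : ℕ) = 0 ∧ (j : ℕ) = 0) ∨ ((i : ℕ) = r ∧ (j : ℕ) = r) then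
    ((q : ℚ) ^ e) * ((q : ℚ) - 1)
  else if ((i : ℕ) = 1 ∧ (j : ℕ) = 0) ∨ ((i : ℕ) = r - 1 ∧ (j : ℕ) = r) then
    -((q : ℚ) - 1)
  else if (i : ℕ) = (j : ℕ) ∧ 1 ≤ (j : ℕ) ∧ (j : ℕ) ≤ r - 1 then
    ((q : ℚ) ^ e) ^ (min (j : ℕ) (r - (j : ℕ)) - 1) * (((q : ℚ) ^ e) ^ 2 + 1)
  else if Nat.dist (i : ℕ) (j : ℕ) = 1 ∧ (j : ℕ) ≠ 0 ∧ (j : ℕ) ≠ r then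
    -(((q : ℚ) ^ e) ^ (min (j : ℕ) (r - (j : ℕ))))
  else 0

/-- ℕ-indexed version of `lambdaInvNum`. -/
def lamM (q e r : ℕ) (i j : ℕ) : ℚ :=
  if (i = 0 ∧ j = 0) ∨ (i = r ∧ j = r) then
    ((q : ℚ) ^ e) * ((q : ℚ) - 1)
  else if (i = 1 ∧ j = 0) ∨ (i = r - 1 ∧ j = r) then
    -((q : ℚ) - 1)
  else if i = j ∧ 1 ≤ j ∧ j ≤ r - 1 then
    ((q : ℚ) ^ e) ^ (min j (r - j) - 1) * (((q : ℚ) ^ e) ^ 2 + 1)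
  else if Nat.dist i j = 1 ∧ j ≠ 0 ∧ j ≠ r then
    -(((q : ℚ) ^ e) ^ (min j (r - j)))
  else 0

/-- ℕ-indexed version of the `(j,k)` entry of `lambdaMat`. -/
def lamL (q e r : ℕ) (j k : ℕ) : ℚ :=
  if j = 0 then ((q : ℚ) ^ e) ^ (r - k)
  else if j = r then ((q : ℚ) ^ e) ^ k
  else ((q : ℚ) ^ e) ^ (r - (min j (r - j) + Nat.dist k j)) * ((q : ℚ) - 1)

lemma nd (a b : ℕ) : Nat.dist a b = a - b + (b - a) := rfl

lemma lamM_zero (q e r i j : ℕ) (h : i + 2 ≤ j ∨ j + 2 ≤ i) : lamM q e r i j = 0 := by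
  unfold lamM
  rw [if_neg (by omega), if_neg (by omega), if_neg (by omega),
    if_neg (by simp only [nd]; try omega)]

lemma lamM_off (q e r i j : ℕ) (h : Nat.dist i j = 1) (hj1 : 1 ≤ j) (hj2 : j ≤ r - 1) :
    lamM q e r i j = -(((q : ℚ) ^ e) ^ (min j (r - j))) := by
  simp only [nd] at h
  unfold lamM
  rw [if_neg (by omega), if_neg (by omega), if_neg (by omega),
    if_pos ⟨by simp only [nd]; try omega, by omega, by omega⟩]

lemma prod_off (q e r i j k : ℕ) (h : Nat.dist i j = 1) (hj1 : 1 ≤ j) (hj2 : j ≤ r - 1)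
    (hk : k ≤ r) :
    lamM q e r i j * lamL q e r j k
      = -(((q : ℚ) ^ e) ^ (r - Nat.dist k j) * ((q : ℚ) - 1)) := by
  rw [lamM_off q e r i j h hj1 hj2]
  unfold lamL
  rw [if_neg (by omega), if_neg (by omega)]
  have hexp : min j (r - j) + (r - (min j (r - j) + Nat.dist k j)) = r - Nat.dist k j := by
    simp only [nd]; try omega
  rw [neg_mul, ← mul_assoc, ← pow_add, hexp]

lemma prod_diag (q e r i k : ℕ) (h1 : 1 ≤ i) (h2 : i ≤ r - 1) (hk : k ≤ r) :
    lamM q e r i i * lamL q e r i k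
      = ((q : ℚ) ^ e) ^ (r - 1 - Nat.dist k i) * (((q : ℚ) ^ e) ^ 2 + 1) * ((q : ℚ) - 1) := by
  unfold lamM lamL
  rw [if_neg (by omega), if_neg (by omega), if_pos ⟨rfl, h1, h2⟩,
    if_neg (by omega), if_neg (by omega)]
  have hexp : min i (r - i) - 1 + (r - (min i (r - i) + Nat.dist k i)) = r - 1 - Nat.dist k i := by
    simp only [nd]; try omega
  rw [mul_mul_mul_comm, ← pow_add, hexp]
  ring

lemma prod_left (q e r i k : ℕ) (h1 : 1 ≤ i) (h2 : i ≤ r - 1) (hk : k ≤ r) :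
    lamM q e r i (i - 1) * lamL q e r (i - 1) k
      = -(((q : ℚ) ^ e) ^ (r - Nat.dist k (i - 1)) * ((q : ℚ) - 1)) := by
  rcases Nat.lt_or_ge i 2 with h | h
  · have hi : i = 1 := by omega
    subst hi
    have h0 : (1 : ℕ) - 1 = 0 := rfl
    rw [h0]
    have hr2 : 2 ≤ r := by omega
    unfold lamM lamL
    rw [if_neg (by omega), if_pos (Or.inl ⟨rfl, rfl⟩), if_pos rfl]
    rw [show r - Nat.dist k 0 = r - k from by simp only [nd]; try omega]
    ring
  · exact prod_off q e r i (i - 1) k (by simp only [nd]; try omega) (by omega) (by omega) hk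

lemma prod_right (q e r i k : ℕ) (h1 : 1 ≤ i) (h2 : i ≤ r - 1) (hk : k ≤ r) :
    lamM q e r i (i + 1) * lamL q e r (i + 1) k
      = -(((q : ℚ) ^ e) ^ (r - Nat.dist k (i + 1)) * ((q : ℚ) - 1)) := by
  have hr2 : 2 ≤ r := by omega
  rcases Nat.lt_or_ge i (r - 1) with h | h
  · exact prod_off q e r i (i + 1) k (by simp only [nd]; try omega) (by omega) (by omega) hk
  · have hi : i = r - 1 := by omega
    have hir : i + 1 = r := by omega
    rw [hir]
    unfold lamM lamL
    rw [if_neg (by omega), if_pos (Or.inr ⟨by omega, rfl⟩), if_neg (by omega), if_pos rfl]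
    rw [show r - Nat.dist k r = k from by simp only [nd]; try omega]
    ring

lemma key (q e r : ℕ) (hq : 2 ≤ q) (hr : 1 ≤ r) (i k : ℕ) (hi : i ≤ r) (hk : k ≤ r) :
    ∑ j ∈ Finset.range (r + 1), lamM q e r i j * lamL q e r j k =
      if i = k then (((q : ℚ) ^ e) ^ (r + 1) - ((q : ℚ) ^ e) ^ (r - 1)) * ((q : ℚ) - 1)
      else 0 := by
  by_cases hr1 : r = 1
  · subst hr1
    rw [Finset.sum_range_succ, Finset.sum_range_succ, Finset.sum_range_zero, zero_add]
    interval_cases i <;> interval_cases k <;>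
      · norm_num [lamM, lamL, Nat.dist]
        ring
  · have hr2 : 2 ≤ r := by omega
    by_cases hi0 : i = 0
    · subst hi0
      have hsum : ∑ j ∈ Finset.range (r + 1), lamM q e r 0 j * lamL q e r j k
          = ∑ j ∈ ({0, 1} : Finset ℕ), lamM q e r 0 j * lamL q e r j k := by
        refine (Finset.sum_subset ?_ ?_).symm
        · intro x hx
          simp only [Finset.mem_insert, Finset.mem_singleton] at hx
          simp only [Finset.mem_range]; omega
        · intro j _ hj
          simp only [Finset.mem_insert, Finset.mem_singleton, not_or] at hj
          rw [lamM_zero q e r 0 j (by omega), zero_mul]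
      rw [hsum, Finset.sum_insert (by norm_num), Finset.sum_singleton]
      have t1 : lamM q e r 0 0 = ((q : ℚ) ^ e) * ((q : ℚ) - 1) := by
        unfold lamM; rw [if_pos (Or.inl ⟨rfl, rfl⟩)]
      have t2 : lamL q e r 0 k = ((q : ℚ) ^ e) ^ (r - k) := by
        unfold lamL; rw [if_pos rfl]
      have t3 : lamM q e r 0 1 * lamL q e r 1 k
          = -(((q : ℚ) ^ e) ^ (r - Nat.dist k 1) * ((q : ℚ) - 1)) :=
        prod_off q e r 0 1 k (by simp only [nd]; try omega) le_rfl (by omega) hk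
      rw [t1, t2, t3]
      by_cases hk0 : k = 0
      · subst hk0
        rw [if_pos rfl, Nat.sub_zero,
          show r - Nat.dist 0 1 = r - 1 from by simp only [nd]; try omega,
          show r + 1 = (r - 1) + 2 from by omega,
          show ((q : ℚ) ^ e) ^ r = ((q : ℚ) ^ e) ^ ((r - 1) + 1) from by congr 1; omega]
        ring
      · rw [if_neg (by omega),
          show r - Nat.dist k 1 = (r - k) + 1 from by simp only [nd]; try omega]
        ring
    · by_cases hir : i = r
      · rw [hir]
        have hsum : ∑ j ∈ Finset.range (r + 1), lamM q e r r j * lamL q e r j k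
            = ∑ j ∈ ({r - 1, r} : Finset ℕ), lamM q e r r j * lamL q e r j k := by
          refine (Finset.sum_subset ?_ ?_).symm
          · intro x hx
            simp only [Finset.mem_insert, Finset.mem_singleton] at hx
            simp only [Finset.mem_range]; omega
          · intro j hjr hj
            simp only [Finset.mem_range] at hjr
            simp only [Finset.mem_insert, Finset.mem_singleton, not_or] at hj
            rw [lamM_zero q e r r j (by omega), zero_mul]
        rw [hsum, Finset.sum_insert (by simp only [Finset.mem_singleton]; omega),
          Finset.sum_singleton]
        have t1 : lamM q e r r (r - 1) * lamL q e r (r - 1) k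
            = -(((q : ℚ) ^ e) ^ (r - Nat.dist k (r - 1)) * ((q : ℚ) - 1)) :=
          prod_off q e r r (r - 1) k (by simp only [nd]; try omega) (by omega) (by omega) hk
        have t2 : lamM q e r r r = ((q : ℚ) ^ e) * ((q : ℚ) - 1) := by
          unfold lamM; rw [if_pos (Or.inr ⟨rfl, rfl⟩)]
        have t3 : lamL q e r r k = ((q : ℚ) ^ e) ^ k := by
          unfold lamL; rw [if_neg (by omega), if_pos rfl]
        rw [t1, t2, t3]
        by_cases hkr : k = r
        · rw [hkr, if_pos rfl,
            show r - Nat.dist r (r - 1) = r - 1 from by simp only [nd]; try omega]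
          ring
        · rw [if_neg (by omega),
            show r - Nat.dist k (r - 1) = k + 1 from by simp only [nd]; try omega]
          ring
      · have h1 : 1 ≤ i := by omega
        have h2 : i ≤ r - 1 := by omega
        have hsum : ∑ j ∈ Finset.range (r + 1), lamM q e r i j * lamL q e r j k
            = ∑ j ∈ ({i - 1, i, i + 1} : Finset ℕ), lamM q e r i j * lamL q e r j k := by
          refine (Finset.sum_subset ?_ ?_).symm
          · intro x hx
            simp only [Finset.mem_insert, Finset.mem_singleton] at hx
            simp only [Finset.mem_range]; omega
          · intro j _ hj
            simp only [Finset.mem_insert, Finset.mem_singleton, not_or] at hj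
            rw [lamM_zero q e r i j (by omega), zero_mul]
        rw [hsum,
          Finset.sum_insert (by simp only [Finset.mem_insert, Finset.mem_singleton]; omega),
          Finset.sum_insert (by simp only [Finset.mem_singleton]; omega),
          Finset.sum_singleton]
        rw [prod_left q e r i k h1 h2 hk, prod_diag q e r i k h1 h2 hk,
          prod_right q e r i k h1 h2 hk]
        rcases lt_trichotomy k i with h | h | h
        · rw [if_neg (by omega),
            show r - Nat.dist k (i - 1) = (r - 1 + k - i) + 2 from by simp only [nd]; try omega,
            show r - 1 - Nat.dist k i = r - 1 + k - i from by simp only [nd]; try omega,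
            show r - Nat.dist k (i + 1) = r - 1 + k - i from by simp only [nd]; try omega]
          ring
        · subst h
          rw [if_pos rfl,
            show r - Nat.dist k (k - 1) = r - 1 from by simp only [nd]; try omega,
            show r - 1 - Nat.dist k k = r - 1 from by simp only [nd]; try omega,
            show r - Nat.dist k (k + 1) = r - 1 from by simp only [nd]; try omega,
            show r + 1 = (r - 1) + 2 from by omega]
          ring
        · rw [if_neg (by omega),
            show r - Nat.dist k (i - 1) = r - 1 + i - k from by simp only [nd]; try omega,
            show r - 1 - Nat.dist k i = r - 1 + i - k from by simp only [nd]; try omega,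
            show r - Nat.dist k (i + 1) = (r - 1 + i - k) + 2 from by simp only [nd]; try omega]
          ring

/-- `M Λ(r) = Λ(r) M = (P^(r+1) - P^(r-1))(q-1) · 1`; in particular `Λ(r)` is invertible
over `ℚ` and `Λ(r)⁻¹ = M / ((P^(r+1) - P^(r-1))(q-1))`. -/
theorem lambda_inverse (q e : ℕ) (hq : 2 ≤ q) (he : 1 ≤ e) (r : ℕ) (hr : 1 ≤ r) :
    lambdaInvNum q e r * lambdaMat q e r =
      ((((q : ℚ) ^ e) ^ (r + 1) - ((q : ℚ) ^ e) ^ (r - 1)) * ((q : ℚ) - 1)) • 1 ∧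
    lambdaMat q e r * lambdaInvNum q e r =
      ((((q : ℚ) ^ e) ^ (r + 1) - ((q : ℚ) ^ e) ^ (r - 1)) * ((q : ℚ) - 1)) • 1 ∧
    IsUnit (lambdaMat q e r) ∧
    (lambdaMat q e r)⁻¹ =
      ((((q : ℚ) ^ e) ^ (r + 1) - ((q : ℚ) ^ e) ^ (r - 1)) * ((q : ℚ) - 1))⁻¹ •
        lambdaInvNum q e r := by
  set c : ℚ := (((q : ℚ) ^ e) ^ (r + 1) - ((q : ℚ) ^ e) ^ (r - 1)) * ((q : ℚ) - 1) with hcdef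
  have hq1 : (1 : ℚ) < (q : ℚ) := by exact_mod_cast hq.trans_lt' one_lt_two
  have hP1 : (1 : ℚ) < (q : ℚ) ^ e := one_lt_pow₀ hq1 (by omega)
  have hlt : ((q : ℚ) ^ e) ^ (r - 1) < ((q : ℚ) ^ e) ^ (r + 1) :=
    pow_lt_pow_right₀ hP1 (by omega)
  have hc : c ≠ 0 := by
    have : 0 < c := mul_pos (by linarith) (by linarith)
    exact ne_of_gt this
  have h1 : lambdaInvNum q e r * lambdaMat q e r = c • 1 := by
    ext i k
    have hl : (lambdaInvNum q e r * lambdaMat q e r) i k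
        = ∑ j ∈ Finset.range (r + 1), lamM q e r i j * lamL q e r j k := by
      rw [Matrix.mul_apply]
      exact Fin.sum_univ_eq_sum_range (fun j => lamM q e r i j * lamL q e r j k) (r + 1)
    rw [hl, key q e r hq hr i k (Nat.lt_succ_iff.mp i.isLt) (Nat.lt_succ_iff.mp k.isLt)]
    simp only [Matrix.smul_apply, Matrix.one_apply, smul_eq_mul, mul_ite, mul_one,
      mul_zero, Fin.val_eq_val, ← hcdef]
  have h2 : (c⁻¹ • lambdaInvNum q e r) * lambdaMat q e r = 1 := by
    rw [Matrix.smul_mul, h1, smul_smul, inv_mul_cancel₀ hc, one_smul]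
  have h3 : lambdaMat q e r * (c⁻¹ • lambdaInvNum q e r) = 1 := mul_eq_one_comm.mp h2
  refine ⟨h1, ?_, ?_, ?_⟩
  · have h4 : lambdaMat q e r * lambdaInvNum q e r
        = c • (lambdaMat q e r * (c⁻¹ • lambdaInvNum q e r)) := by
      rw [Matrix.mul_smul, smul_smul, mul_inv_cancel₀ hc, one_smul]
    rw [h4, h3]
  · have := invertibleOfRightInverse _ _ h3
    exact isUnit_of_invertible _
  · rw [Matrix.inv_eq_right_inv h3]
end

section
/- Fix integers q ≥ 2, e ≥ 1 and set P = q^e. For every integer r ≥ 1, let w ∈ ℚ^{r+1} be the vector with w_0 = w_r = 1 and w_j = P^{min(j,r−j)−1}(P−1)/(q−1) for 1 ≤ j ≤ r−1. Then for every 0 ≤ i ≤ r, the weighted row sum Σ_{j=0}^{r} Λ(r)ᵀ_{i,j}·w_j equals P^r + P^{r−1}; i.e., this weighted sum is the same for every row i. (This expresses that the divisors div(Δ_{𝔭^i}) on X₀(𝔭^r) all have the same degree P^r + P^{r−1}, where w_j is the degree of the rational cuspidal divisor (P_{𝔭^j}).) -/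
/-- The degree vector `w`: `w_0 = w_r = 1` and `w_j = P^(min(j,r-j)-1) * (P-1)/(q-1)`
for `1 ≤ j ≤ r-1`, where `P = q^e`. -/
def degVec (q e r : ℕ) : Fin (r + 1) → ℚ := fun j =>
  if (j : ℕ) = 0 ∨ (j : ℕ) = r then 1
  else ((q : ℚ) ^ e) ^ (min (j : ℕ) (r - (j : ℕ)) - 1) * (((q : ℚ) ^ e) - 1) / ((q : ℚ) - 1)

/-- Telescoping helper: the middle-column contribution. -/
lemma telescope_mid (P : ℚ) (s i : ℕ) (hi : i ≤ s + 1) :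
    ∑ k ∈ Finset.range s,
        (P ^ (s + 1 - Nat.dist i (k + 1)) - P ^ (s - Nat.dist i (k + 1)))
      = P ^ (s + 1) + P ^ s - P ^ (s + 1 - i) - P ^ i := by
  rcases eq_or_ne i 0 with rfl | hne0
  · have hcong : ∀ k ∈ Finset.range s,
        P ^ (s + 1 - Nat.dist 0 (k + 1)) - P ^ (s - Nat.dist 0 (k + 1))
          = (fun k => P ^ (s - k)) k - (fun k => P ^ (s - k)) (k + 1) := by
      intro k hk
      simp only [Finset.mem_range] at hk
      have hd : Nat.dist 0 (k + 1) = k + 1 := by simp [Nat.dist]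
      have h1 : s + 1 - Nat.dist 0 (k + 1) = s - k := by omega
      have h2 : s - Nat.dist 0 (k + 1) = s - (k + 1) := by omega
      rw [h1, h2]
    rw [Finset.sum_congr rfl hcong, Finset.sum_range_sub' (fun k => P ^ (s - k))]
    simp only [Nat.sub_zero, Nat.sub_self, pow_zero]
    ring
  rcases eq_or_ne i (s + 1) with rfl | hner
  · have hcong : ∀ k ∈ Finset.range s,
        P ^ (s + 1 - Nat.dist (s + 1) (k + 1)) - P ^ (s - Nat.dist (s + 1) (k + 1))
          = (fun k => P ^ k) (k + 1) - (fun k => P ^ k) k := by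
      intro k hk
      simp only [Finset.mem_range] at hk
      have hd : Nat.dist (s + 1) (k + 1) = s - k := by
        have : Nat.dist (s + 1) (k + 1) = (s + 1) - (k + 1) + ((k + 1) - (s + 1)) := rfl
        omega
      have h1 : s + 1 - Nat.dist (s + 1) (k + 1) = k + 1 := by omega
      have h2 : s - Nat.dist (s + 1) (k + 1) = k := by omega
      rw [h1, h2]
    rw [Finset.sum_congr rfl hcong, Finset.sum_range_sub (fun k => P ^ k)]
    simp only [Nat.sub_self, pow_zero]
    ring
  · -- 1 ≤ i ≤ s
    have h1 : 1 ≤ i := by omega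
    have h2 : i ≤ s := by omega
    rw [Finset.range_eq_Ico,
      ← Finset.sum_Ico_consecutive _ (Nat.zero_le (i - 1)) (by omega : i - 1 ≤ s),
      ← Finset.range_eq_Ico, Finset.sum_Ico_eq_sum_range]
    have hA : ∑ k ∈ Finset.range (i - 1),
        (P ^ (s + 1 - Nat.dist i (k + 1)) - P ^ (s - Nat.dist i (k + 1)))
          = P ^ s - P ^ (s + 1 - i) := by
      have hcong : ∀ k ∈ Finset.range (i - 1),
          P ^ (s + 1 - Nat.dist i (k + 1)) - P ^ (s - Nat.dist i (k + 1))
            = (fun k => P ^ (s + 1 - i + k)) (k + 1) - (fun k => P ^ (s + 1 - i + k)) k := by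
        intro k hk
        simp only [Finset.mem_range] at hk
        have hd : Nat.dist i (k + 1) = i - (k + 1) := by
          have : Nat.dist i (k + 1) = i - (k + 1) + ((k + 1) - i) := rfl
          omega
        have e1 : s + 1 - Nat.dist i (k + 1) = s + 1 - i + (k + 1) := by omega
        have e2 : s - Nat.dist i (k + 1) = s + 1 - i + k := by omega
        rw [e1, e2]
      rw [Finset.sum_congr rfl hcong, Finset.sum_range_sub (fun k => P ^ (s + 1 - i + k))]
      have e3 : s + 1 - i + (i - 1) = s := by omega
      have e4 : s + 1 - i + 0 = s + 1 - i := by omega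
      rw [e3, e4]
    have hB : ∑ k ∈ Finset.range (s - (i - 1)),
        (P ^ (s + 1 - Nat.dist i (i - 1 + k + 1)) - P ^ (s - Nat.dist i (i - 1 + k + 1)))
          = P ^ (s + 1) - P ^ i := by
      have hcong : ∀ k ∈ Finset.range (s - (i - 1)),
          P ^ (s + 1 - Nat.dist i (i - 1 + k + 1)) - P ^ (s - Nat.dist i (i - 1 + k + 1))
            = (fun k => P ^ (s + 1 - k)) k - (fun k => P ^ (s + 1 - k)) (k + 1) := by
        intro k hk
        simp only [Finset.mem_range] at hk
        have hd : Nat.dist i (i - 1 + k + 1) = k := by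
          have : Nat.dist i (i - 1 + k + 1)
              = i - (i - 1 + k + 1) + ((i - 1 + k + 1) - i) := rfl
          omega
        have e1 : s + 1 - Nat.dist i (i - 1 + k + 1) = s + 1 - k := by omega
        have e2 : s - Nat.dist i (i - 1 + k + 1) = s + 1 - (k + 1) := by omega
        rw [e1, e2]
      rw [Finset.sum_congr rfl hcong, Finset.sum_range_sub' (fun k => P ^ (s + 1 - k))]
      have e3 : s + 1 - (s - (i - 1)) = i := by omega
      have e4 : s + 1 - 0 = s + 1 := by omega
      rw [e3, e4]
    rw [hA, hB]
    ring

/-- Every weighted row sum `Σ_j Λ(r)ᵀ_{i,j} · w_j` equals `P^r + P^(r-1)`: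
the divisors `div(Δ_{𝔭^i})` all have the same degree `P^r + P^(r-1)`. -/
theorem lambdaT_weighted_row_sum (q e : ℕ) (hq : 2 ≤ q) (he : 1 ≤ e) (r : ℕ) (hr : 1 ≤ r)
    (i : Fin (r + 1)) :
    ∑ j : Fin (r + 1), lambdaT q e r i j * degVec q e r j =
      ((q : ℚ) ^ e) ^ r + ((q : ℚ) ^ e) ^ (r - 1) := by
  obtain ⟨s, rfl⟩ : ∃ s, r = s + 1 := ⟨r - 1, by omega⟩
  obtain ⟨i, hi⟩ := i
  have hile : i ≤ s + 1 := by omega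
  have hq1 : (q : ℚ) - 1 ≠ 0 := by
    have h2 : (2 : ℚ) ≤ (q : ℚ) := by exact_mod_cast hq
    linarith
  set P : ℚ := (q : ℚ) ^ e with hPdef
  set G : ℕ → ℚ := fun j =>
    if j = 0 then P ^ (s + 1 - i)
    else if j = s + 1 then P ^ i
    else P ^ (s + 1 - Nat.dist i j) - P ^ (s - Nat.dist i j) with hG
  have hstep : ∀ j : Fin (s + 2),
      lambdaT q e (s + 1) ⟨i, hi⟩ j * degVec q e (s + 1) j = G (j : ℕ) := by
    intro j
    have hjlt : (j : ℕ) < s + 2 := j.isLt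
    rcases eq_or_ne (j : ℕ) 0 with h0 | h0
    · simp [lambdaT, degVec, hG, h0, hPdef]
    rcases eq_or_ne (j : ℕ) (s + 1) with hr' | hr'
    · simp [lambdaT, degVec, hG, h0, hr', hPdef]
    · have hj1 : 1 ≤ (j : ℕ) := by omega
      have hj2 : (j : ℕ) ≤ s := by omega
      simp only [lambdaT, degVec, hG, h0, hr', if_false, if_neg, or_self,
        ite_false]
      rw [← hPdef]
      set m : ℕ := min (j : ℕ) (s + 1 - (j : ℕ)) with hm
      set d : ℕ := Nat.dist i (j : ℕ) with hd
      have hdval : d = i - (j : ℕ) + ((j : ℕ) - i) := rfl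
      have hm1 : 1 ≤ m := by omega
      have hmd : m + d ≤ s + 1 := by omega
      have hds : d ≤ s := by omega
      have e1 : s + 1 - (m + d) + (m - 1) = s - d := by omega
      have e2 : s + 1 - d = (s - d) + 1 := by omega
      calc P ^ (s + 1 - (m + d)) * ((q : ℚ) - 1) * (P ^ (m - 1) * (P - 1) / ((q : ℚ) - 1))
          = P ^ (s + 1 - (m + d)) * P ^ (m - 1) * (P - 1) := by
            field_simp
        _ = P ^ (s - d) * (P - 1) := by rw [← pow_add, e1]
        _ = P ^ (s + 1 - d) - P ^ (s - d) := by rw [e2, pow_succ]; ring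
  calc ∑ j : Fin (s + 2), lambdaT q e (s + 1) ⟨i, hi⟩ j * degVec q e (s + 1) j
      = ∑ j ∈ Finset.range (s + 2), G j := by
        rw [← Fin.sum_univ_eq_sum_range]
        exact Finset.sum_congr rfl fun j _ => hstep j
    _ = (∑ j ∈ Finset.range (s + 1), G j) + G (s + 1) := Finset.sum_range_succ G (s + 1)
    _ = ((∑ k ∈ Finset.range s, G (k + 1)) + G 0) + G (s + 1) := by
        rw [Finset.sum_range_succ' G s]
    _ = P ^ (s + 1) + P ^ (s + 1 - 1) := by
        have hG0 : G 0 = P ^ (s + 1 - i) := by simp [hG]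
        have hGr : G (s + 1) = P ^ i := by simp [hG]
        have hmid : ∀ k ∈ Finset.range s,
            G (k + 1) = P ^ (s + 1 - Nat.dist i (k + 1)) - P ^ (s - Nat.dist i (k + 1)) := by
          intro k hk
          simp only [Finset.mem_range] at hk
          simp only [hG]
          rw [if_neg (by omega), if_neg (by omega)]
        rw [hG0, hGr, Finset.sum_congr rfl hmid, telescope_mid P s i hile]
        have : s + 1 - 1 = s := by omega
        rw [this]
        ring
end

section
/- Fix integers q ≥ 2, e ≥ 1 and set P = q^e. Let r ≥ 1 and let w ∈ ℚ^{r+1} be the vector with w_0 = w_r = 1 and w_j = P^{min(j,r−j)−1}(P−1)/(q−1) for 1 ≤ j ≤ r−1. If a, x ∈ ℚ^{r+1} satisfy Λ(r)·x = a and Σ_{j=0}^{r} a_j·w_j = 0, then Σ_{j=0}^{r} x_j = 0. (In the paper: for any degree-zero rational cuspidal divisor C = Σ a_d (P_d), the exponent vector r_d = Λ(𝔫)^{−1}·a defining g(C) satisfies Σ_d r_d = 0.) -/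
private lemma geom_aux (x : ℚ) (n : ℕ) :
    ∑ k ∈ Finset.range n, (x - 1) * x ^ k = x ^ n - 1 := by
  rw [← Finset.mul_sum, mul_comm, geom_sum_mul]

private lemma rowSum (q e r : ℕ) (hq : 2 ≤ q) (hr : 1 ≤ r) (i : ℕ) (hi : i ≤ r) :
    ∑ j ∈ Finset.range (r + 1),
      ((if j = 0 then ((q:ℚ)^e)^(r-i)
        else if j = r then ((q:ℚ)^e)^i
        else ((q:ℚ)^e)^(r - (min j (r - j) + Nat.dist i j)) * ((q:ℚ) - 1)) *
       (if j = 0 ∨ j = r then 1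
        else ((q:ℚ)^e)^(min j (r - j) - 1) * (((q:ℚ)^e) - 1) / ((q:ℚ) - 1)))
      = ((q:ℚ)^e)^r + ((q:ℚ)^e)^(r-1) := by
  have hq1 : (q:ℚ) - 1 ≠ 0 := by
    have h2 : (1:ℚ) < (q:ℚ) := by exact_mod_cast (by omega : 1 < q)
    exact sub_ne_zero.mpr h2.ne'
  set P : ℚ := (q:ℚ)^e with hP
  obtain ⟨s, rfl⟩ : ∃ s, r = s + 1 := ⟨r - 1, by omega⟩
  set G : ℕ → ℚ := fun j =>
    if j = 0 then P^(s+1-i)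
    else if j = s+1 then P^i
    else (P - 1) * P^(s - Nat.dist i j) with hG
  have hsimp : ∀ j ∈ Finset.range (s + 2),
      ((if j = 0 then P^(s+1-i)
        else if j = s+1 then P^i
        else P^(s+1 - (min j (s+1 - j) + Nat.dist i j)) * ((q:ℚ) - 1)) *
       (if j = 0 ∨ j = s+1 then 1
        else P^(min j (s+1 - j) - 1) * (P - 1) / ((q:ℚ) - 1)))
      = G j := by
    intro j hj
    rcases eq_or_ne j 0 with rfl | h0
    · simp [hG]
    rcases eq_or_ne j (s+1) with rfl | hr'
    · simp [hG]
    simp only [Finset.mem_range] at hj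
    have hd : Nat.dist i j = (i - j) + (j - i) := rfl
    simp only [hG, h0, hr', if_false, if_neg (by tauto : ¬(j = 0 ∨ j = s+1)), or_self]
    have hexp : (s + 1 - (min j (s+1-j) + Nat.dist i j)) + (min j (s+1-j) - 1)
        = s - Nat.dist i j := by omega
    rw [show P ^ (s + 1 - (min j (s+1-j) + Nat.dist i j)) * ((q:ℚ) - 1) *
        (P ^ (min j (s+1-j) - 1) * (P - 1) / ((q:ℚ) - 1))
      = P ^ (s + 1 - (min j (s+1-j) + Nat.dist i j)) * P ^ (min j (s+1-j) - 1) *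
        (P - 1) from by rw [mul_div_assoc', div_eq_iff hq1]; ring, ← pow_add, hexp]
    ring
  rw [Finset.sum_congr rfl hsimp, Finset.sum_range_succ, Finset.sum_range_succ']
  have hGm : ∀ k ∈ Finset.range s,
      (if k+1 = 0 then P^(s+1-i) else if k+1 = s+1 then P^i
       else (P-1) * P^(s - Nat.dist i (k+1)))
      = (P-1) * P^(s - Nat.dist i (k+1)) := by
    intro k hk
    simp only [Finset.mem_range] at hk
    rw [if_neg (by omega), if_neg (by omega)]
  rw [Finset.sum_congr rfl hGm, if_pos rfl, if_neg (by omega : ¬ s+1 = 0), if_pos rfl]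
  -- split the middle sum
  set m := min i s with hm
  rw [show (∑ k ∈ Finset.range s, (P - 1) * P ^ (s - Nat.dist i (k+1)))
      = ∑ k ∈ Finset.range (m + (s - m)), (P - 1) * P ^ (s - Nat.dist i (k+1)) from by
        rw [Nat.add_sub_cancel' (min_le_right i s)],
    Finset.sum_range_add]
  have hfirst : ∀ k ∈ Finset.range m,
      (P - 1) * P ^ (s - Nat.dist i (k+1)) = (P - 1) * (P ^ (s+1-i) * P ^ k) := by
    intro k hk
    simp only [Finset.mem_range] at hk
    have hd : Nat.dist i (k+1) = (i - (k+1)) + ((k+1) - i) := rfl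
    rw [← pow_add]
    congr 2
    omega
  have hsecond : ∀ k ∈ Finset.range (s - m),
      (P - 1) * P ^ (s - Nat.dist i (m + k + 1)) = (P - 1) * P ^ (s - 1 - k) := by
    intro k hk
    simp only [Finset.mem_range] at hk
    have hd : Nat.dist i (m + k + 1) = (i - (m+k+1)) + ((m+k+1) - i) := rfl
    congr 2
    omega
  rw [Finset.sum_congr rfl hfirst, Finset.sum_congr rfl hsecond]
  have h1 : ∑ k ∈ Finset.range m, (P - 1) * (P ^ (s+1-i) * P ^ k)
      = P ^ (s+1-i) * (P ^ m - 1) := by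
    rw [← geom_aux P m, Finset.mul_sum]
    exact Finset.sum_congr rfl fun k _ => by ring
  have h2 : ∑ k ∈ Finset.range (s - m), (P - 1) * P ^ (s - 1 - k)
      = P ^ i * (P ^ (s - m) - 1) := by
    rw [← geom_aux P (s - m), ← Finset.sum_range_reflect (fun k => (P-1) * P ^ (s-1-k)) (s-m),
      Finset.mul_sum]
    refine Finset.sum_congr rfl fun k hk => ?_
    simp only [Finset.mem_range] at hk
    rw [← mul_assoc, mul_comm (P^i), mul_assoc, ← pow_add]
    congr 2
    omega
  rw [h1, h2]
  rcases le_or_gt i s with h | h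
  · have hmi : m = i := by omega
    rw [hmi]
    have e1 : P ^ (s+1-i) * P ^ i = P ^ (s+1) := by rw [← pow_add]; congr 1; omega
    have e2 : P ^ i * P ^ (s - i) = P ^ s := by rw [← pow_add]; congr 1; omega
    have e3 : s + 1 - 1 = s := by omega
    rw [e3]
    nlinarith [e1, e2]
  · have hi' : i = s + 1 := by omega
    have hms : m = s := by omega
    rw [hi', hms]
    simp only [Nat.sub_self, pow_zero, Nat.add_sub_cancel]
    ring

/-- If `Λ(r)·x = a` and the weighted sum `Σ_j a_j w_j` vanishes (i.e. the corresponding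
divisor has degree zero), then `Σ_j x_j = 0`: the exponent vector of `g(C)`
has coordinate sum zero. -/
theorem sum_exponents_eq_zero (q e : ℕ) (hq : 2 ≤ q) (he : 1 ≤ e) (r : ℕ) (hr : 1 ≤ r)
    (a x : Fin (r + 1) → ℚ) (hax : (lambdaMat q e r).mulVec x = a)
    (hdeg : ∑ j : Fin (r + 1), a j * degVec q e r j = 0) :
    ∑ j : Fin (r + 1), x j = 0 := by
  subst hax
  have key : ∀ i : Fin (r + 1),
      ∑ j : Fin (r + 1), lambdaT q e r i j * degVec q e r j
        = ((q:ℚ)^e)^r + ((q:ℚ)^e)^(r-1) := by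
    intro i
    have h := rowSum q e r hq hr (i : ℕ) (by omega)
    rw [← h, ← Fin.sum_univ_eq_sum_range (fun j =>
      ((if j = 0 then ((q:ℚ)^e)^(r-(i:ℕ))
        else if j = r then ((q:ℚ)^e)^(i:ℕ)
        else ((q:ℚ)^e)^(r - (min j (r - j) + Nat.dist (i:ℕ) j)) * ((q:ℚ) - 1)) *
       (if j = 0 ∨ j = r then 1
        else ((q:ℚ)^e)^(min j (r - j) - 1) * (((q:ℚ)^e) - 1) / ((q:ℚ) - 1)))) (r+1)]
    rfl
  have hswap : ∑ j : Fin (r + 1), ((lambdaMat q e r).mulVec x) j * degVec q e r j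
      = ∑ i : Fin (r + 1), x i * ∑ j : Fin (r + 1), lambdaT q e r i j * degVec q e r j := by
    simp only [Matrix.mulVec, dotProduct, lambdaMat, Matrix.transpose_apply,
      Finset.sum_mul]
    rw [Finset.sum_comm]
    refine Finset.sum_congr rfl fun i _ => ?_
    rw [Finset.mul_sum]
    exact Finset.sum_congr rfl fun j _ => by ring
  simp only [key] at hswap
  rw [hswap] at hdeg
  have hq0 : (0:ℚ) < (q:ℚ) := by exact_mod_cast (by omega : 0 < q)
  have hPe : (0:ℚ) < (q:ℚ)^e := pow_pos hq0 e
  have hC : (0:ℚ) < ((q:ℚ)^e)^r + ((q:ℚ)^e)^(r-1) :=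
    add_pos (pow_pos hPe r) (pow_pos hPe (r-1))
  have : (∑ i : Fin (r + 1), x i) * (((q:ℚ)^e)^r + ((q:ℚ)^e)^(r-1)) = 0 := by
    rw [Finset.sum_mul]; rw [← hdeg]
  rcases mul_eq_zero.mp this with h | h
  · exact h
  · exact absurd h hC.ne'
end

section
/- Fix integers q ≥ 2, e ≥ 1 and set P = q^e. For every integer r ≥ 3, letting e_0, …, e_r denote the standard basis of ℚ^{r+1}, one has the identity Λ(r)·(P·e_0 − e_1 + e_{r−1} − P·e_r) = (P^{r+1} − P^{r−1})·(e_0 − e_r). (In the paper this is the computation g([0]−[∞]) = (Δ^{P} · Δ_{𝔭}^{−1} · Δ_{𝔭^{r−1}} · Δ_{𝔭^{r}}^{−P})^{1/(P^{r+1}−P^{r−1})} on X₀(𝔭^r).) -/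
/-- `Λ(r)·(P·e₀ − e₁ + e_{r−1} − P·e_r) = (P^{r+1} − P^{r−1})·(e₀ − e_r)` for `r ≥ 3`:
the computation of `g([0]−[∞])` on `X₀(𝔭^r)`. -/
theorem g_of_zero_minus_infty (q e : ℕ) (hq : 2 ≤ q) (he : 1 ≤ e) (r : ℕ) (hr : 3 ≤ r) :
    (lambdaMat q e r).mulVec
        (Pi.single (0 : Fin (r + 1)) ((q : ℚ) ^ e) -
          Pi.single (1 : Fin (r + 1)) 1 +
          Pi.single (⟨r - 1, by omega⟩ : Fin (r + 1)) 1 -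
          Pi.single (⟨r, by omega⟩ : Fin (r + 1)) ((q : ℚ) ^ e)) =
      (((q : ℚ) ^ e) ^ (r + 1) - ((q : ℚ) ^ e) ^ (r - 1)) •
        (Pi.single (0 : Fin (r + 1)) 1 - Pi.single (⟨r, by omega⟩ : Fin (r + 1)) 1) := by
  funext k
  rw [Matrix.mulVec_sub, Matrix.mulVec_add, Matrix.mulVec_sub]
  simp only [Matrix.mulVec_single, Pi.sub_apply, Pi.add_apply, Pi.smul_apply,
    Pi.single_apply, smul_eq_mul, lambdaMat, Matrix.transpose_apply, op_smul_eq_mul,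
    Matrix.col_apply]
  have h1 : ((1 : Fin (r + 1)) : ℕ) = 1 := by
    simp [Fin.val_one']; omega
  have hk := k.isLt
  rcases eq_or_ne (k : ℕ) 0 with hk0 | hk0
  · have hkeq : k = 0 := by ext; simpa using hk0
    subst hkeq
    have hne : ¬ ((0 : Fin (r+1)) = ⟨r, by omega⟩) := by
      simp [Fin.ext_iff]; omega
    simp only [lambdaT, h1, Fin.val_zero, if_pos rfl, if_neg hne, if_true]
    have e2 : r - (r - 1) = 1 := by omega
    have e3 : r + 1 = r + 1 := rfl
    rw [e2, Nat.sub_zero, Nat.sub_self, pow_zero, pow_one, pow_succ]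
    ring
  · rcases eq_or_ne (k : ℕ) r with hkr | hkr
    · have hkeq : k = (⟨r, by omega⟩ : Fin (r+1)) := by ext; simpa using hkr
      have hne0 : ¬ (k = 0) := by rw [Fin.ext_iff, Fin.val_zero]; omega
      have hrne0 : (k : ℕ) ≠ 0 := hk0
      simp only [lambdaT, h1, Fin.val_zero, if_neg hrne0, if_pos hkr, if_neg hne0,
        if_pos hkeq]
      rw [pow_succ]
      ring
    · have hk1 : 1 ≤ (k : ℕ) := by omega
      have hkr1 : (k : ℕ) ≤ r - 1 := by omega
      have hne0 : ¬ (k = 0) := by rw [Fin.ext_iff, Fin.val_zero]; omega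
      have hner : ¬ (k = (⟨r, by omega⟩ : Fin (r+1))) := by simp [Fin.ext_iff]; omega
      simp only [lambdaT, h1, Fin.val_zero, if_neg hk0, if_neg hkr, if_neg hne0,
        if_neg hner]
      set m := min (k : ℕ) (r - (k : ℕ)) with hm
      have hm1 : m ≤ (k : ℕ) := by omega
      have hm2 : m + (k : ℕ) ≤ r := by omega
      have d0 : Nat.dist 0 (k : ℕ) = (k : ℕ) := by simp [Nat.dist]
      have d1 : Nat.dist 1 (k : ℕ) = (k : ℕ) - 1 := by simp [Nat.dist]; omega
      have d2 : Nat.dist (r - 1) (k : ℕ) = r - 1 - (k : ℕ) := by simp [Nat.dist]; omega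
      have d3 : Nat.dist r (k : ℕ) = r - (k : ℕ) := by simp [Nat.dist]; omega
      rw [d0, d1, d2, d3]
      have e1 : r - (m + ((k : ℕ) - 1)) = (r - (m + (k : ℕ))) + 1 := by omega
      have e2 : r - (m + (r - 1 - (k : ℕ))) = (r - (m + (r - (k : ℕ)))) + 1 := by omega
      rw [e1, e2, pow_succ, pow_succ]
      ring
end

section
/- Let 𝔽_q be a finite field, A = 𝔽_q[T], K = 𝔽_q(T), and let 𝔫 ∈ A be monic. Then for every point x of the projective line ℙ¹(K), there exist a matrix γ ∈ Γ₀(𝔫) and monic polynomials a, d ∈ A with d dividing 𝔫 and gcd(a, 𝔫) = 1, such that γ·x is the point of ℙ¹(K) with homogeneous coordinates (a : d). -/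
open Polynomial

/-- Avoidance lemma: given `a` coprime to `d`, one can shift `a` by a multiple of `d`
to make it coprime to any nonzero `n`. -/
private lemma avoid_lemma {F : Type*} [Field F] (n : Polynomial F) (hn : n ≠ 0) :
    ∀ a d : Polynomial F, IsCoprime a d → ∃ t, IsCoprime (a + t * d) n := by
  classical
  revert hn
  induction n using WfDvdMonoid.induction_on_irreducible with
  | zero => exact fun h => absurd rfl h
  | unit u hu' =>
    intro _ a d _
    obtain ⟨w, hw⟩ := hu'.exists_right_inv
    exact ⟨0, 0, w, by linear_combination hw⟩
  | mul n' i hn' hirr ih =>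
    intro _ a d had
    obtain ⟨t, ht⟩ := ih hn' a d had
    have hprime : Prime i := UniqueFactorizationMonoid.irreducible_iff_prime.mp hirr
    have had' : IsCoprime (a + t * d) d := had.add_mul_right_left t
    by_cases hdvd : i ∣ (a + t * d)
    · have h1 : IsCoprime (a + (t + n') * d) n' := by
        have he : a + (t + n') * d = (a + t * d) + n' * d := by ring
        rw [he]
        exact ht.add_mul_left_left d
      have h2 : ¬ i ∣ (a + (t + n') * d) := by
        intro hdiv
        have h3 : i ∣ n' * d := by
          have h4 := dvd_sub hdiv hdvd
          have h5 : a + (t + n') * d - (a + t * d) = n' * d := by ring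
          rwa [h5] at h4
        rcases hprime.dvd_or_dvd h3 with h | h
        · exact hirr.not_isUnit (ht.isUnit_of_dvd' hdvd h)
        · exact hirr.not_isUnit (had'.isUnit_of_dvd' hdvd h)
      exact ⟨t + n', (hprime.coprime_iff_not_dvd.mpr h2).symm.mul_right h1⟩
    · exact ⟨t, (hprime.coprime_iff_not_dvd.mpr hdvd).symm.mul_right ht⟩

/-- Core lemma over the polynomial ring: given coprime homogeneous coordinates `(p, q)`,
produce a matrix in `Γ₀(n)` moving `(p, q)` exactly to a normalized cusp representative. -/
private lemma core_lemma {F : Type*} [Field F] (n : Polynomial F) (hn : n.Monic)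
    (p q : Polynomial F) (hpq : IsCoprime p q) :
    ∃ γ : Matrix (Fin 2) (Fin 2) (Polynomial F),
      IsUnit γ.det ∧ n ∣ γ 1 0 ∧
      ∃ a d : Polynomial F, a.Monic ∧ d.Monic ∧ d ∣ n ∧ IsCoprime a n ∧
        γ.mulVec ![p, q] = ![a, d] := by
  classical
  have hn0 : n ≠ 0 := hn.ne_zero
  obtain ⟨g, hgdef⟩ : ∃ g, g = EuclideanDomain.gcd (n * p) q := ⟨_, rfl⟩
  have hgnp : g ∣ n * p := hgdef ▸ EuclideanDomain.gcd_dvd_left _ _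
  have hgq : g ∣ q := hgdef ▸ EuclideanDomain.gcd_dvd_right _ _
  have hg0 : g ≠ 0 := by
    intro h
    obtain ⟨h1, h2⟩ := EuclideanDomain.gcd_eq_zero_iff.mp (hgdef ▸ h)
    have hp0 : p = 0 := by
      rcases mul_eq_zero.mp h1 with h | h
      · exact absurd h hn0
      · exact h
    rw [hp0, h2] at hpq
    exact not_isCoprime_zero_zero hpq
  have hgp : IsCoprime g p := hpq.symm.of_isCoprime_of_dvd_left hgq
  have hgn : g ∣ n := hgp.dvd_of_dvd_mul_right hgnp
  obtain ⟨m, hm⟩ := hgnp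
  obtain ⟨q₁, hq₁⟩ := hgq
  obtain ⟨u, hudef⟩ : ∃ u, u = EuclideanDomain.gcdA (n * p) q := ⟨_, rfl⟩
  obtain ⟨v, hvdef⟩ : ∃ v, v = EuclideanDomain.gcdB (n * p) q := ⟨_, rfl⟩
  have hbez : g = (n * p) * u + q * v := by
    rw [hgdef, hudef, hvdef]; exact EuclideanDomain.gcd_eq_gcd_ab (n * p) q
  have key : m * u + q₁ * v = 1 := by
    have h2 : g * (m * u + q₁ * v) = g * 1 := by
      linear_combination (-1 : Polynomial F) * hbez - u * hm - v * hq₁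
    exact mul_left_cancel₀ hg0 h2
  obtain ⟨t, hv'0⟩ := avoid_lemma n hn0 v m ⟨q₁, u, by linear_combination key⟩
  obtain ⟨u', hu'def⟩ : ∃ u', u' = u - t * q₁ := ⟨_, rfl⟩
  obtain ⟨v', hv'def⟩ : ∃ v', v' = v + t * m := ⟨_, rfl⟩
  have hv' : IsCoprime v' n := by rw [hv'def]; exact hv'0
  have key' : m * u' + q₁ * v' = 1 := by
    rw [hu'def, hv'def]; linear_combination key
  obtain ⟨c, hcdef⟩ : ∃ c, c = u' * n := ⟨_, rfl⟩
  have hcd : IsCoprime c v' := by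
    rw [hcdef]
    exact IsCoprime.mul_left ⟨m, q₁, by linear_combination key'⟩ hv'.symm
  have hE1 : c * p + v' * q = g := by
    rw [hcdef]
    linear_combination u' * hm + v' * hq₁ + g * key'
  obtain ⟨A, B, hAB⟩ := hcd
  obtain ⟨α, hαdef⟩ : ∃ α, α = B := ⟨_, rfl⟩
  obtain ⟨β, hβdef⟩ : ∃ β, β = -A := ⟨_, rfl⟩
  have hdet1 : α * v' - β * c = 1 := by rw [hαdef, hβdef]; linear_combination hAB
  obtain ⟨a₀, ha₀def⟩ : ∃ a₀, a₀ = α * p + β * q := ⟨_, rfl⟩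
  have ha₀g : IsCoprime a₀ g := by
    obtain ⟨x, y, hxy⟩ := hpq
    refine ⟨x * v' - y * c, y * α - x * β, ?_⟩
    rw [ha₀def]
    linear_combination (x * β - y * α) * hE1 + (α * v' - β * c) * hxy + hdet1
  obtain ⟨s₀, hs₀⟩ := avoid_lemma n hn0 a₀ g ha₀g
  obtain ⟨s, ha₁0, ha₁n⟩ : ∃ s, a₀ + s * g ≠ 0 ∧ IsCoprime (a₀ + s * g) n := by
    by_cases h0 : a₀ + s₀ * g = 0
    · have hun : IsUnit n := isCoprime_zero_left.mp (h0 ▸ hs₀)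
      refine ⟨s₀ + 1, ?_, ?_⟩
      · have he : a₀ + (s₀ + 1) * g = g := by linear_combination h0
        rw [he]; exact hg0
      · obtain ⟨w, hw⟩ := hun.exists_right_inv
        exact ⟨0, w, by linear_combination hw⟩
    · exact ⟨s₀, h0, hs₀⟩
  obtain ⟨a₁, ha₁def⟩ : ∃ a₁, a₁ = a₀ + s * g := ⟨_, rfl⟩
  rw [← ha₁def] at ha₁0 ha₁n
  obtain ⟨ε, hεdef⟩ : ∃ ε, ε = Polynomial.C (a₁.leadingCoeff⁻¹) := ⟨_, rfl⟩
  obtain ⟨η, hηdef⟩ : ∃ η, η = Polynomial.C (g.leadingCoeff⁻¹) := ⟨_, rfl⟩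
  have hεu : IsUnit ε := by
    rw [hεdef]
    exact Polynomial.isUnit_C.mpr
      (isUnit_iff_ne_zero.mpr (inv_ne_zero (Polynomial.leadingCoeff_ne_zero.mpr ha₁0)))
  have hηu : IsUnit η := by
    rw [hηdef]
    exact Polynomial.isUnit_C.mpr
      (isUnit_iff_ne_zero.mpr (inv_ne_zero (Polynomial.leadingCoeff_ne_zero.mpr hg0)))
  have hamonic : (a₁ * ε).Monic := by
    rw [hεdef]; exact Polynomial.monic_mul_leadingCoeff_inv ha₁0
  have hdmonic : (g * η).Monic := by
    rw [hηdef]; exact Polynomial.monic_mul_leadingCoeff_inv hg0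
  refine ⟨!![ε * (α + s * c), ε * (β + s * v'); η * c, η * v'], ?_, ?_, a₁ * ε, g * η,
    hamonic, hdmonic, ?_, ?_, ?_⟩
  · rw [Matrix.det_fin_two_of]
    have he : ε * (α + s * c) * (η * v') - ε * (β + s * v') * (η * c) = ε * η := by
      linear_combination ε * η * hdet1
    rw [he]
    exact hεu.mul hηu
  · have he : (!![ε * (α + s * c), ε * (β + s * v'); η * c, η * v'] :
        Matrix (Fin 2) (Fin 2) (Polynomial F)) 1 0 = η * c := by simp
    rw [he, hcdef]
    exact ⟨η * u', by ring⟩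
  · refine dvd_trans ⟨Polynomial.C g.leadingCoeff, ?_⟩ hgn
    rw [hηdef, mul_assoc, ← Polynomial.C_mul,
      inv_mul_cancel₀ (Polynomial.leadingCoeff_ne_zero.mpr hg0), Polynomial.C_1, mul_one]
  · refine IsCoprime.mul_left ha₁n ?_
    exact ⟨Polynomial.C a₁.leadingCoeff, 0, by
      rw [hεdef, zero_mul, add_zero, ← Polynomial.C_mul,
        mul_inv_cancel₀ (Polynomial.leadingCoeff_ne_zero.mpr ha₁0), Polynomial.C_1]⟩
  · funext i
    fin_cases i <;>
      simp only [Matrix.mulVec, dotProduct, Fin.sum_univ_two, Matrix.cons_val',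
        Matrix.cons_val_zero, Matrix.cons_val_one, Matrix.head_cons, Matrix.empty_val',
        Matrix.cons_val_fin_one, Matrix.of_apply, Fin.isValue, Fin.zero_eta, Fin.mk_one,
        Matrix.vecHead, Matrix.vecTail]
    · rw [ha₁def, ha₀def]
      linear_combination (ε * s) * hE1
    · linear_combination η * hE1

set_option synthInstance.maxHeartbeats 400000 in
/-- Every point of `ℙ¹(K)`, `K = 𝔽_q(T)`, represented by a pair `(x, y) ≠ (0, 0)` of
homogeneous coordinates, can be moved by some `γ ∈ Γ₀(𝔫)` (a matrix in `GL₂(𝔽_q[T])`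
whose lower-left entry is divisible by `𝔫`) to a point with homogeneous coordinates
`(a : d)` where `a, d ∈ 𝔽_q[T]` are monic, `d ∣ 𝔫`, and `gcd(a, 𝔫) = 1`. -/
theorem cusp_representative (F : Type*) [Field F] [Fintype F]
    (n : Polynomial F) (hn : n.Monic) :
    ∀ x y : RatFunc F, ¬(x = 0 ∧ y = 0) →
      ∃ γ : Matrix (Fin 2) (Fin 2) (Polynomial F),
        IsUnit γ.det ∧ n ∣ γ 1 0 ∧
        ∃ a d : Polynomial F, a.Monic ∧ d.Monic ∧ d ∣ n ∧ IsCoprime a n ∧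
          ∃ c : RatFunc F, c ≠ 0 ∧
            (γ.map (algebraMap (Polynomial F) (RatFunc F))).mulVec ![x, y] =
              c • ![algebraMap (Polynomial F) (RatFunc F) a,
                    algebraMap (Polynomial F) (RatFunc F) d] := by
  intro x y hxy
  obtain ⟨c₀, p, q, hc₀, hpq, hx, hy⟩ :
      ∃ (c₀ : RatFunc F) (p q : Polynomial F), c₀ ≠ 0 ∧ IsCoprime p q ∧
        x = c₀ * algebraMap (Polynomial F) (RatFunc F) p ∧
        y = c₀ * algebraMap (Polynomial F) (RatFunc F) q := by
    by_cases hy0 : y = 0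
    · have hx0 : x ≠ 0 := fun h => hxy ⟨h, hy0⟩
      exact ⟨x, 1, 0, hx0, isCoprime_one_left, by simp, by simp [hy0]⟩
    · have hd0 : algebraMap (Polynomial F) (RatFunc F) (x / y).denom ≠ 0 :=
        RatFunc.algebraMap_ne_zero (x / y).denom_ne_zero
      refine ⟨y / algebraMap (Polynomial F) (RatFunc F) (x / y).denom,
        (x / y).num, (x / y).denom, div_ne_zero hy0 hd0, RatFunc.isCoprime_num_denom _,
        ?_, ?_⟩
      · rw [div_mul_eq_mul_div, mul_comm, ← div_mul_eq_mul_div,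
          RatFunc.num_div_denom (x / y)]
        field_simp
      · rw [div_mul_cancel₀ _ hd0]
  obtain ⟨γ, hdet, hγ10, a, d, ham, hdm, hdn, han, hvec⟩ := core_lemma n hn p q hpq
  refine ⟨γ, hdet, hγ10, a, d, ham, hdm, hdn, han, c₀, hc₀, ?_⟩
  funext i
  have h0 := congrFun hvec i
  simp only [Matrix.mulVec, dotProduct, Fin.sum_univ_two, Matrix.cons_val_zero,
    Matrix.cons_val_one, Matrix.head_cons] at h0
  have h1 := congrArg (algebraMap (Polynomial F) (RatFunc F)) h0
  simp only [map_add, map_mul] at h1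
  fin_cases i <;>
    simp only [Matrix.mulVec, dotProduct, Fin.sum_univ_two, Matrix.map_apply,
      Matrix.cons_val_zero, Matrix.cons_val_one, Matrix.head_cons, Pi.smul_apply,
      smul_eq_mul, Fin.isValue, Fin.zero_eta, Fin.mk_one, hx, hy] at h1 ⊢ <;>
    linear_combination c₀ * h1
end

section
/- Let 𝔽_q be a finite field, A = 𝔽_q[T], K = 𝔽_q(T), let 𝔭 ∈ A be a monic irreducible polynomial, and let r ≥ 1. Suppose a, b ∈ A are monic with gcd(a, 𝔭) = gcd(b, 𝔭) = 1 and 0 ≤ i, j ≤ r. If the points (a : 𝔭^i) and (b : 𝔭^j) of ℙ¹(K) lie in the same Γ₀(𝔭^r)-orbit, then i = j. (Thus the height 𝔭^i of a cusp of X₀(𝔭^r) is well defined.) -/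
/-!
Clearing the scalar, `γ (a, 𝔭^i) ∼ (b, 𝔭^j)` becomes the polynomial identity
`𝔭^j (γ₀₀ a + γ₀₁ 𝔭^i) = b (γ₁₀ a + γ₁₁ 𝔭^i)`. Since `𝔭 ∣ γ₁₀` and `det γ` is a unit, `𝔭` divides
neither `γ₀₀` nor `γ₁₁`. Comparing the powers of `𝔭` on both sides then gives `j ≤ i`
(because `𝔭^j ∣ γ₁₀` and `𝔭 ∤ γ₁₁`) and `i ≤ j` (because `𝔭^i ∣ γ₁₀` and `𝔭 ∤ γ₀₀ a`).
-/

namespace Matrix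

variable {R : Type*} [CommRing R]

theorem cross_mul_eq_of_map_mulVec_eq_smul {K : Type*} [CommRing K] {f : R →+* K}
    (hf : Function.Injective f) (γ : Matrix (Fin 2) (Fin 2) R) {x₀ x₁ y₀ y₁ : R} {c : K}
    (h : (γ.map f) *ᵥ ![f x₀, f x₁] = c • ![f y₀, f y₁]) :
    y₁ * (γ 0 0 * x₀ + γ 0 1 * x₁) = y₀ * (γ 1 0 * x₀ + γ 1 1 * x₁) := by
  have h₀ := congrFun h 0
  have h₁ := congrFun h 1
  simp only [mulVec, dotProduct, Fin.sum_univ_two, map_apply, cons_val_zero, cons_val_one,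
    Pi.smul_apply, smul_eq_mul] at h₀ h₁
  apply hf
  simp only [map_mul, map_add]
  linear_combination f y₁ * h₀ - f y₀ * h₁

theorem not_dvd_apply_zero_zero_of_isUnit_det {γ : Matrix (Fin 2) (Fin 2) R} (hγ : IsUnit γ.det)
    {p : R} (hp : ¬IsUnit p) (h₁₀ : p ∣ γ 1 0) : ¬p ∣ γ 0 0 := fun h₀₀ ↦
  hp <| isUnit_of_dvd_unit (det_fin_two γ ▸ dvd_sub (h₀₀.mul_right _) (h₁₀.mul_left _)) hγ

theorem not_dvd_apply_one_one_of_isUnit_det {γ : Matrix (Fin 2) (Fin 2) R} (hγ : IsUnit γ.det)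
    {p : R} (hp : ¬IsUnit p) (h₁₀ : p ∣ γ 1 0) : ¬p ∣ γ 1 1 := fun h₁₁ ↦
  hp <| isUnit_of_dvd_unit (det_fin_two γ ▸ dvd_sub (h₁₁.mul_left _) (h₁₀.mul_left _)) hγ

end Matrix

section PowDvd

variable {R : Type*} [CommRing R] [IsDomain R] {p a c d e f : R} {i j : ℕ}

theorem le_of_pow_dvd_mul_add_mul_pow (hp : p ≠ 0) (hd : ¬p ∣ d) (hc : p ^ j ∣ c)
    (h : p ^ j ∣ c * a + d * p ^ i) : j ≤ i := by
  by_contra! hij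
  have hsucc : p ^ (i + 1) ∣ p ^ j := pow_dvd_pow p hij
  have hdp : p ^ (i + 1) ∣ d * p ^ i := by
    simpa using dvd_sub (hsucc.trans h) ((hsucc.trans hc).mul_right a)
  rw [pow_succ, mul_comm d] at hdp
  exact hd ((mul_dvd_mul_iff_left (pow_ne_zero i hp)).mp hdp)

theorem le_of_pow_dvd_pow_mul_add_mul_pow (hp : p ≠ 0) (ha : IsCoprime a p) (he : ¬p ∣ e)
    (h : p ^ i ∣ p ^ j * (e * a + f * p ^ i)) : i ≤ j := by
  by_contra! hij
  have hsum : p ∣ e * a + f * p ^ i := by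
    have : p ^ j * p ∣ p ^ j * (e * a + f * p ^ i) := (pow_succ p j ▸ pow_dvd_pow p hij).trans h
    exact (mul_dvd_mul_iff_left (pow_ne_zero j hp)).mp this
  have hea : p ∣ e * a := by
    simpa using dvd_sub hsum ((dvd_pow_self p (by omega : i ≠ 0)).mul_left f)
  exact he (ha.symm.dvd_of_dvd_mul_right hea)

end PowDvd

set_option synthInstance.maxHeartbeats 400000 in
theorem height_well_defined_general (F : Type*) [Field F]
    (p : Polynomial F) (hirr : Irreducible p) (r : ℕ) (hr : 1 ≤ r)
    (a b : Polynomial F)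
    (hca : IsCoprime a p) (hcb : IsCoprime b p)
    (i j : ℕ) (hi : i ≤ r) (hj : j ≤ r)
    (horbit : ∃ γ : Matrix (Fin 2) (Fin 2) (Polynomial F),
      IsUnit γ.det ∧ p ^ r ∣ γ 1 0 ∧
      ∃ c : RatFunc F, c ≠ 0 ∧
        (γ.map (algebraMap (Polynomial F) (RatFunc F))).mulVec
            ![algebraMap (Polynomial F) (RatFunc F) a,
              algebraMap (Polynomial F) (RatFunc F) (p ^ i)] =
          c • ![algebraMap (Polynomial F) (RatFunc F) b,
                algebraMap (Polynomial F) (RatFunc F) (p ^ j)]) :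
    i = j := by
  obtain ⟨γ, hdet, hγ₁₀, c, -, h⟩ := horbit
  have hcross := γ.cross_mul_eq_of_map_mulVec_eq_smul (IsFractionRing.injective _ (RatFunc F)) h
  have hp₁₀ : p ∣ γ 1 0 := (dvd_pow_self p (by omega)).trans hγ₁₀
  have hpi : p ^ i ∣ γ 1 0 := (pow_dvd_pow p hi).trans hγ₁₀
  have hpj : p ^ j ∣ γ 1 0 := (pow_dvd_pow p hj).trans hγ₁₀
  apply le_antisymm
  · have hdvd : p ^ i ∣ p ^ j * (γ 0 0 * a + γ 0 1 * p ^ i) := by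
      rw [hcross]
      exact (dvd_add (hpi.mul_right a) (dvd_mul_left _ _)).mul_left b
    exact le_of_pow_dvd_pow_mul_add_mul_pow hirr.ne_zero hca
      (Matrix.not_dvd_apply_zero_zero_of_isUnit_det hdet hirr.not_isUnit hp₁₀) hdvd
  · have hdvd : p ^ j ∣ γ 1 0 * a + γ 1 1 * p ^ i :=
      hcb.pow_right.symm.dvd_of_dvd_mul_left (hcross ▸ dvd_mul_right _ _)
    exact le_of_pow_dvd_mul_add_mul_pow hirr.ne_zero
      (Matrix.not_dvd_apply_one_one_of_isUnit_det hdet hirr.not_isUnit hp₁₀) hpj hdvd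

set_option synthInstance.maxHeartbeats 400000 in
/-- If two points `(a : 𝔭^i)` and `(b : 𝔭^j)` of `ℙ¹(K)`, with `a, b` monic and coprime
to the monic irreducible `𝔭`, and `0 ≤ i, j ≤ r`, lie in the same `Γ₀(𝔭^r)`-orbit,
then `i = j`: the height of a cusp of `X₀(𝔭^r)` is well defined. -/
theorem height_well_defined (F : Type*) [Field F] [Fintype F]
    (p : Polynomial F) (hp : p.Monic) (hirr : Irreducible p) (r : ℕ) (hr : 1 ≤ r)
    (a b : Polynomial F) (ha : a.Monic) (hb : b.Monic)
    (hca : IsCoprime a p) (hcb : IsCoprime b p)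
    (i j : ℕ) (hi : i ≤ r) (hj : j ≤ r)
    (horbit : ∃ γ : Matrix (Fin 2) (Fin 2) (Polynomial F),
      IsUnit γ.det ∧ p ^ r ∣ γ 1 0 ∧
      ∃ c : RatFunc F, c ≠ 0 ∧
        (γ.map (algebraMap (Polynomial F) (RatFunc F))).mulVec
            ![algebraMap (Polynomial F) (RatFunc F) a,
              algebraMap (Polynomial F) (RatFunc F) (p ^ i)] =
          c • ![algebraMap (Polynomial F) (RatFunc F) b,
                algebraMap (Polynomial F) (RatFunc F) (p ^ j)]) :
    i = j :=
  height_well_defined_general F p hirr r hr a b hca hcb i j hi hj horbit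
end

section
/- Let 𝔽_q be a finite field, A = 𝔽_q[T], K = 𝔽_q(T), let 𝔭 ∈ A be a monic irreducible polynomial of degree e, set P = q^e, and let r ≥ 1 and 0 ≤ i ≤ r. Then the number of Γ₀(𝔭^r)-orbits on ℙ¹(K) that contain a point of the form (a : 𝔭^i) with a ∈ A monic and gcd(a, 𝔭) = 1 equals: 1 if i = 0 or i = r, and P^{m−1}(P−1)/(q−1) with m = min(i, r−i) if 0 < i < r. (This is the degree of the rational cuspidal divisor (P_{𝔭^i}) on X₀(𝔭^r), the sum of all cusps of height 𝔭^i.) -/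
set_option synthInstance.maxHeartbeats 400000 in
/-- The relation on monic polynomials `a` coprime to `𝔭` identifying `a` and `b` when
the points `(a : 𝔭^i)` and `(b : 𝔭^i)` of `ℙ¹(K)` lie in the same `Γ₀(𝔭^r)`-orbit. -/
def sameCuspRel (F : Type*) [Field F] [Fintype F] (p : Polynomial F) (r i : ℕ)
    (a b : {f : Polynomial F // f.Monic ∧ IsCoprime f p}) : Prop :=
  ∃ γ : Matrix (Fin 2) (Fin 2) (Polynomial F),
    IsUnit γ.det ∧ p ^ r ∣ γ 1 0 ∧
    ∃ c : RatFunc F, c ≠ 0 ∧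
      (γ.map (algebraMap (Polynomial F) (RatFunc F))).mulVec
          ![algebraMap (Polynomial F) (RatFunc F) a.1,
            algebraMap (Polynomial F) (RatFunc F) (p ^ i)] =
        c • ![algebraMap (Polynomial F) (RatFunc F) b.1,
              algebraMap (Polynomial F) (RatFunc F) (p ^ i)]

open Polynomial in
theorem sameCuspRel_iff (F : Type*) [Field F] [Fintype F] (p : Polynomial F)
    (hirr : Irreducible p) (r i : ℕ) (hi : i ≤ r)
    (a b : {f : Polynomial F // f.Monic ∧ IsCoprime f p}) :
    sameCuspRel F p r i a b ↔
      ∃ u : Fˣ, p ^ (min i (r - i)) ∣ (a.1 - Polynomial.C (u : F) * b.1) := by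
  have hpne : p ≠ 0 := hirr.ne_zero
  have hpr : (p : Polynomial F) ^ r = p ^ (r - i) * p ^ i := by
    rw [← pow_add]; congr 1; omega
  set φ := algebraMap (Polynomial F) (RatFunc F) with hφ
  have hφinj : Function.Injective φ := RatFunc.algebraMap_injective F
  constructor
  · rintro ⟨γ, hdet, ⟨t, ht⟩, c, hc, hvec⟩
    have h0 := congrFun hvec 0
    have h1 := congrFun hvec 1
    simp only [Matrix.mulVec, dotProduct, Fin.sum_univ_two, Matrix.map_apply,
      Matrix.cons_val_zero, Matrix.cons_val_one, Matrix.head_cons, Pi.smul_apply,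
      smul_eq_mul] at h0 h1
    have hpi0 : φ (p ^ i) ≠ 0 := by
      simpa using (map_ne_zero_iff φ hφinj).mpr (pow_ne_zero i hpne)
    -- c = φ M with M := p^(r-i)*t*a + γ 1 1
    have hceq : c = φ (p ^ (r - i) * t * a.1 + γ 1 1) := by
      have : φ (p ^ i) * φ (p ^ (r - i) * t * a.1 + γ 1 1) = c * φ (p ^ i) := by
        rw [← h1, ht]
        rw [← map_mul, ← map_mul, ← map_mul, ← map_add]
        congr 1
        rw [hpr]; ring
      exact mul_right_cancel₀ hpi0 (by rw [← this]; ring)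
    have E1 : γ 0 0 * a.1 + γ 0 1 * p ^ i = (p ^ (r - i) * t * a.1 + γ 1 1) * b.1 := by
      apply hφinj
      rw [map_add, map_mul, map_mul, map_mul, h0, hceq]
    have hkey : γ.det = (p ^ (r - i) * t * a.1 + γ 1 1) * (γ 0 0 - p ^ (r - i) * t * b.1) := by
      rw [Matrix.det_fin_two, ht, hpr]
      linear_combination (-(p ^ (r - i) * t)) * E1
    have hMunit : IsUnit (p ^ (r - i) * t * a.1 + γ 1 1) := by
      rw [hkey] at hdet
      exact isUnit_of_mul_isUnit_left hdet
    obtain ⟨μ, hμu, hμ⟩ := Polynomial.isUnit_iff.mp hMunit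
    obtain ⟨ε, hεu, hε⟩ := Polynomial.isUnit_iff.mp hdet
    have hμne : μ ≠ 0 := hμu.ne_zero
    have hεne : ε ≠ 0 := hεu.ne_zero
    refine ⟨Units.mk0 (μ ^ 2 * ε⁻¹) (mul_ne_zero (pow_ne_zero _ hμne) (inv_ne_zero hεne)), ?_⟩
    have hCεμ : Polynomial.C (ε * μ⁻¹) = γ 0 0 - p ^ (r - i) * t * b.1 := by
      apply mul_left_cancel₀ (show (Polynomial.C μ : Polynomial F) ≠ 0 by
        simpa using hμne)
      rw [← Polynomial.C_mul, show μ * (ε * μ⁻¹) = ε by field_simp, hε, hkey, hμ]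
    have hCC : Polynomial.C (ε * μ⁻¹) * Polynomial.C (μ ^ 2 * ε⁻¹) = Polynomial.C μ := by
      rw [← Polynomial.C_mul]
      congr 1
      field_simp
    have hdvd2 : p ^ min i (r - i) ∣
        Polynomial.C (ε * μ⁻¹) * (a.1 - Polynomial.C (μ ^ 2 * ε⁻¹) * b.1) := by
      have heq : Polynomial.C (ε * μ⁻¹) * (a.1 - Polynomial.C (μ ^ 2 * ε⁻¹) * b.1)
          = -(p ^ (r - i) * t * b.1 * a.1) - γ 0 1 * p ^ i := by
        linear_combination a.1 * hCεμ - b.1 * hCC - b.1 * hμ + E1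
      rw [heq]
      refine dvd_sub (dvd_neg.mpr ?_) ?_
      · exact Dvd.dvd.mul_right
          (Dvd.dvd.mul_right ((pow_dvd_pow p (min_le_right i (r - i))).mul_right t) _) _
      · exact Dvd.dvd.mul_left (pow_dvd_pow p (min_le_left i (r - i))) _
    have := hdvd2.mul_left (Polynomial.C (ε * μ⁻¹)⁻¹)
    rwa [← mul_assoc, ← Polynomial.C_mul, inv_mul_cancel₀ (mul_ne_zero hεne (inv_ne_zero hμne)), Polynomial.C_1,
      one_mul] at this
  · rintro ⟨u, hdvd⟩
    set lam : F := (u : F) with hlam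
    have hlamne : lam ≠ 0 := u.ne_zero
    -- find t such that p^i ∣ b - (C lam⁻¹ + p^(r-i)*t*b)*a
    obtain ⟨t, β, hβ⟩ : ∃ t β : Polynomial F,
        b.1 - (Polynomial.C lam⁻¹ + p ^ (r - i) * t * b.1) * a.1 = p ^ i * β := by
      have hd1 : p ^ min i (r - i) ∣ b.1 - Polynomial.C lam⁻¹ * a.1 := by
        have h2 := hdvd.mul_left (Polynomial.C lam⁻¹)
        have : Polynomial.C lam⁻¹ * (a.1 - Polynomial.C lam * b.1)
            = -(b.1 - Polynomial.C lam⁻¹ * a.1) := by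
          rw [mul_sub, ← mul_assoc, ← Polynomial.C_mul, inv_mul_cancel₀ hlamne,
            Polynomial.C_1, one_mul]
          ring
        rw [this, dvd_neg] at h2
        exact h2
      rcases le_or_gt i (r - i) with hle | hlt
      · rw [min_eq_left hle] at hd1
        obtain ⟨β, hβ⟩ := hd1
        exact ⟨0, β, by rw [← hβ]; ring⟩
      · rw [min_eq_right hlt.le] at hd1
        obtain ⟨s, hs⟩ := hd1
        have hcop : IsCoprime (a.1 * b.1) (p ^ (i - (r - i))) :=
          (a.2.2.mul_left b.2.2).pow_right
        obtain ⟨x, y, hxy⟩ := hcop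
        refine ⟨x * s, s * y, ?_⟩
        have hpow : p ^ (r - i) * p ^ (i - (r - i)) = p ^ i := by
          rw [← pow_add]; congr 1; omega
        calc b.1 - (Polynomial.C lam⁻¹ + p ^ (r - i) * (x * s) * b.1) * a.1
            = (b.1 - Polynomial.C lam⁻¹ * a.1) - p ^ (r - i) * (x * s) * b.1 * a.1 := by ring
          _ = p ^ (r - i) * (s * (1 - x * (a.1 * b.1))) := by rw [hs]; ring
          _ = p ^ (r - i) * (s * (y * p ^ (i - (r - i)))) := by
              congr 2
              linear_combination -hxy
          _ = p ^ i * (s * y) := by rw [← hpow]; ring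
    refine ⟨!![Polynomial.C lam⁻¹ + p ^ (r - i) * t * b.1, β; p ^ r * t,
      1 - p ^ (r - i) * a.1 * t], ?_, ?_, 1, one_ne_zero, ?_⟩
    · rw [Matrix.det_fin_two_of]
      have : (Polynomial.C lam⁻¹ + p ^ (r - i) * t * b.1) * (1 - p ^ (r - i) * a.1 * t)
          - β * (p ^ r * t) = Polynomial.C lam⁻¹ := by
        rw [hpr]
        linear_combination (p ^ (r - i) * t) * hβ
      rw [this]
      exact (Polynomial.isUnit_C).mpr (isUnit_iff_ne_zero.mpr (inv_ne_zero hlamne))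
    · show p ^ r ∣ !![Polynomial.C lam⁻¹ + p ^ (r - i) * t * b.1, β; p ^ r * t,
          1 - p ^ (r - i) * a.1 * t] 1 0
      simp only [Matrix.cons_val', Matrix.cons_val_zero, Matrix.empty_val', Matrix.of_apply,
        Matrix.cons_val_fin_one, Matrix.cons_val_one, Matrix.head_cons, Matrix.head_fin_const]
      exact dvd_mul_right _ _
    · funext x
      fin_cases x <;>
        simp only [Matrix.mulVec, dotProduct, Fin.sum_univ_two, Matrix.map_apply,
          Matrix.cons_val', Matrix.cons_val_zero, Matrix.empty_val', Matrix.cons_val_fin_one,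
          Matrix.cons_val_one, Matrix.head_cons, Matrix.head_fin_const, Matrix.of_apply, Pi.smul_apply,
          smul_eq_mul, one_mul, Fin.mk_zero, Fin.mk_one]
      · rw [← map_mul, ← map_mul, ← map_add]
        congr 1
        linear_combination -hβ
      · rw [← map_mul, ← map_mul, ← map_add]
        congr 1
        rw [hpr]; ring

open Polynomial

theorem natCard_adjoinRoot {F : Type*} [Field F] [Fintype F] (g : Polynomial F) (hg : g.Monic) :
    Nat.card (AdjoinRoot g) = Fintype.card F ^ g.natDegree := by
  let b := (AdjoinRoot.powerBasis' hg).basis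
  rw [Nat.card_congr b.equivFun.toEquiv, Nat.card_eq_fintype_card, Fintype.card_fun,
    Fintype.card_fin]
  rfl

theorem natCard_polyQuot {F : Type*} [Field F] [Fintype F] (g : Polynomial F) (hg : g.Monic) :
    Nat.card (Polynomial F ⧸ Ideal.span {g}) = Fintype.card F ^ g.natDegree :=
  natCard_adjoinRoot g hg

theorem finite_polyQuot {F : Type*} [Field F] [Fintype F] (g : Polynomial F) (hg : g.Monic) :
    Finite (Polynomial F ⧸ Ideal.span {g}) :=
  Finite.of_equiv _ (AdjoinRoot.powerBasis' hg).basis.equivFun.toEquiv.symm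

theorem natCard_units_polyQuot {F : Type*} [Field F] [Fintype F] {p : Polynomial F}
    (hp : p.Monic) (hirr : Irreducible p) (m : ℕ) (hm : 1 ≤ m) :
    Nat.card (Polynomial F ⧸ Ideal.span {p ^ m})ˣ =
      (Fintype.card F ^ p.natDegree) ^ (m - 1) * (Fintype.card F ^ p.natDegree - 1) := by
  classical
  set P := Fintype.card F ^ p.natDegree with hP
  set I : Ideal (Polynomial F) := Ideal.span {p ^ m} with hI
  have hpne : p ≠ 0 := hirr.ne_zero
  have hQcard : Nat.card (Polynomial F ⧸ I) = P ^ m := by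
    rw [hI, natCard_polyQuot _ (hp.pow m), natDegree_pow, hP, ← pow_mul, mul_comm]
  have hmkeq : ∀ u v : Polynomial F,
      Ideal.Quotient.mk I u = Ideal.Quotient.mk I v ↔ p ^ m ∣ u - v := by
    intro u v
    rw [Ideal.Quotient.eq, hI, Ideal.mem_span_singleton]
  have hchar : ∀ z : Polynomial F ⧸ I,
      ¬ IsUnit z ↔ ∃ v : Polynomial F, Ideal.Quotient.mk I (p * v) = z := by
    intro z
    obtain ⟨w, rfl⟩ := Ideal.Quotient.mk_surjective z
    constructor
    · intro hnu
      by_cases hnd : p ∣ w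
      · obtain ⟨v, rfl⟩ := hnd
        exact ⟨v, rfl⟩
      · exfalso
        have hcop : IsCoprime w (p ^ m) :=
          ((hirr.coprime_iff_not_dvd.mpr hnd).symm).pow_right
        obtain ⟨x, y, hxy⟩ := hcop
        refine hnu (IsUnit.of_mul_eq_one (Ideal.Quotient.mk I x) ?_)
        rw [← map_mul, ← map_one (Ideal.Quotient.mk I)]
        exact (hmkeq _ _).mpr ⟨-y, by linear_combination hxy⟩
    · rintro ⟨v, hv⟩ hu
      rw [← hv] at hu
      obtain ⟨z0, hz0⟩ := hu.exists_right_inv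
      obtain ⟨y0, rfl⟩ := Ideal.Quotient.mk_surjective z0
      have hdvd : p ^ m ∣ p * v * y0 - 1 := by
        apply (hmkeq _ _).mp
        rw [map_one, map_mul, hz0]
      have hp1 : p ∣ 1 := by
        have h1 : p ∣ p * v * y0 - 1 := (dvd_pow_self p (by omega : m ≠ 0)).trans hdvd
        have h2 : p ∣ p * v * y0 := ⟨v * y0, by ring⟩
        have := dvd_sub h2 h1
        simpa using this
      exact hirr.not_isUnit (isUnit_of_dvd_one hp1)
  haveI : Finite (Polynomial F ⧸ I) := finite_polyQuot _ (hp.pow m)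
  haveI : Fintype (Polynomial F ⧸ I) := Fintype.ofFinite _
  have hpm : p ^ m = p * p ^ (m - 1) := by
    rw [← pow_succ']; congr 1; omega
  set ψ : Polynomial F →ₗ[Polynomial F] Polynomial F ⧸ I :=
    (I : Submodule (Polynomial F) (Polynomial F)).mkQ ∘ₗ LinearMap.mulLeft (Polynomial F) p
    with hψ
  have hker : LinearMap.ker ψ = (Ideal.span {p ^ (m - 1)} : Ideal (Polynomial F)) := by
    ext x
    simp only [hψ, LinearMap.mem_ker, LinearMap.coe_comp, Function.comp_apply,
      LinearMap.mulLeft_apply, Submodule.mkQ_apply, Submodule.Quotient.mk_eq_zero, hI,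
      Ideal.mem_span_singleton]
    constructor
    · rintro ⟨c, hc⟩
      refine ⟨c, mul_left_cancel₀ hpne ?_⟩
      rw [hc, hpm]; ring
    · rintro ⟨c, rfl⟩
      exact ⟨c, by rw [hpm]; ring⟩
  have hrange : ∀ z : Polynomial F ⧸ I, z ∈ LinearMap.range ψ ↔ ¬ IsUnit z := by
    intro z
    rw [hchar z]
    constructor
    · rintro ⟨x, hx⟩
      exact ⟨x, hx⟩
    · rintro ⟨v, hv⟩
      exact ⟨v, hv⟩
  have hNUcard : Nat.card {z : Polynomial F ⧸ I // ¬ IsUnit z} = P ^ (m - 1) := by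
    have e2 : {z : Polynomial F ⧸ I // ¬ IsUnit z} ≃ LinearMap.range ψ :=
      Equiv.subtypeEquivRight (fun z => (hrange z).symm)
    have e1 : (Polynomial F ⧸ (Ideal.span {p ^ (m - 1)} : Ideal (Polynomial F))) ≃ₗ[Polynomial F]
        LinearMap.range ψ := by
      rw [← hker]; exact ψ.quotKerEquivRange
    rw [Nat.card_congr e2, ← Nat.card_congr e1.toEquiv,
      natCard_polyQuot _ (hp.pow (m - 1)), natDegree_pow, hP, ← pow_mul, mul_comm]
  have eU : (Polynomial F ⧸ I)ˣ ≃ {z : Polynomial F ⧸ I // IsUnit z} :=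
    { toFun := fun u => ⟨u, u.isUnit⟩
      invFun := fun z => z.2.unit
      left_inv := fun u => Units.ext u.isUnit.unit_spec
      right_inv := fun z => Subtype.ext z.2.unit_spec }
  have hcompl : Fintype.card {z : Polynomial F ⧸ I // ¬ IsUnit z}
      = Fintype.card (Polynomial F ⧸ I) - Fintype.card {z : Polynomial F ⧸ I // IsUnit z} :=
    Fintype.card_subtype_compl _
  have hle : Fintype.card {z : Polynomial F ⧸ I // IsUnit z}
      ≤ Fintype.card (Polynomial F ⧸ I) := Fintype.card_subtype_le _
  have hP1 : 1 ≤ P := Nat.one_le_iff_ne_zero.mpr (pow_ne_zero _ Fintype.card_ne_zero)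
  have hPm : P ^ m = P ^ (m - 1) * P := by rw [← pow_succ]; congr 1; omega
  have key : P ^ (m - 1) * (P - 1) + P ^ (m - 1) = P ^ m := by
    have h1 : P - 1 + 1 = P := by omega
    calc P ^ (m - 1) * (P - 1) + P ^ (m - 1) = P ^ (m - 1) * ((P - 1) + 1) := by ring
      _ = P ^ (m - 1) * P := by rw [h1]
      _ = P ^ m := hPm.symm
  rw [Nat.card_congr eU, Nat.card_eq_fintype_card]
  rw [Nat.card_eq_fintype_card] at hQcard hNUcard
  omega


theorem exists_monic_rep {F : Type*} [Field F] {p : Polynomial F} (hp : p.Monic)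
    (hirr : Irreducible p) {m : ℕ} (hm : 1 ≤ m) (w : Polynomial F) (hw : ¬ p ∣ w) :
    ∃ f : Polynomial F, f.Monic ∧ IsCoprime f p ∧ p ^ m ∣ f - w := by
  set k := w.natDegree + 1 with hk
  set f := p ^ m * X ^ k + w with hf
  have hmon : (p ^ m * X ^ k).Monic := (hp.pow m).mul (monic_X_pow k)
  have hdeg : w.degree < (p ^ m * X ^ k).degree := by
    apply degree_lt_degree
    rw [(hp.pow m).natDegree_mul (monic_X_pow k), natDegree_X_pow]
    omega
  have hfm : f.Monic := hmon.add_of_left hdeg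
  have hnd : ¬ p ∣ f := by
    intro hdf
    apply hw
    have h2 : p ∣ p ^ m * X ^ k := (dvd_pow_self p (by omega)).mul_right _
    have := dvd_sub hdf h2
    simpa [hf] using this
  exact ⟨f, hfm, (hirr.coprime_iff_not_dvd.mpr hnd).symm, ⟨X ^ k, by rw [hf]; ring⟩⟩


/-- The number of `Γ₀(𝔭^r)`-orbits on `ℙ¹(K)` containing a point of the form `(a : 𝔭^i)`
with `a` monic and coprime to `𝔭` (equivalently, the number of classes of such `a` under
the same-orbit relation) is `1` if `i = 0` or `i = r`, and `P^{m−1}(P−1)/(q−1)` with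
`m = min(i, r−i)` and `P = q^{deg 𝔭}` if `0 < i < r`: this is the degree of the rational
cuspidal divisor `(P_{𝔭^i})` on `X₀(𝔭^r)`. -/
theorem card_cusps_of_height (F : Type*) [Field F] [Fintype F]
    (p : Polynomial F) (hp : p.Monic) (hirr : Irreducible p)
    (r i : ℕ) (hr : 1 ≤ r) (hi : i ≤ r) :
    Nat.card (Quot (sameCuspRel F p r i)) =
      if i = 0 ∨ i = r then 1
      else (Fintype.card F ^ p.natDegree) ^ (min i (r - i) - 1) *
        (Fintype.card F ^ p.natDegree - 1) / (Fintype.card F - 1) := by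
  classical
  by_cases h0 : i = 0 ∨ i = r
  · rw [if_pos h0]
    have hm0 : min i (r - i) = 0 := by rcases h0 with h | h <;> omega
    rw [Nat.card_eq_one_iff_unique]
    refine ⟨⟨fun x y => ?_⟩, ⟨Quot.mk _ ⟨1, monic_one, isCoprime_one_left⟩⟩⟩
    obtain ⟨s, rfl⟩ := Quot.exists_rep x
    obtain ⟨t, rfl⟩ := Quot.exists_rep y
    apply Quot.sound
    rw [sameCuspRel_iff F p hirr r i hi]
    exact ⟨1, by rw [hm0, pow_zero]; exact one_dvd _⟩
  · rw [if_neg h0]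
    push_neg at h0
    set m := min i (r - i) with hm
    have hm1 : 1 ≤ m := by omega
    set I : Ideal (Polynomial F) := Ideal.span {p ^ m} with hI
    have hpne : p ≠ 0 := hirr.ne_zero
    have hmkeq : ∀ u v : Polynomial F,
        Ideal.Quotient.mk I u = Ideal.Quotient.mk I v ↔ p ^ m ∣ u - v := by
      intro u v
      rw [Ideal.Quotient.eq, hI, Ideal.mem_span_singleton]
    have hU : ∀ s : {f : Polynomial F // f.Monic ∧ IsCoprime f p},
        IsUnit (Ideal.Quotient.mk I s.1) := by
      intro s
      obtain ⟨x, y, hxy⟩ := s.2.2.pow_right (n := m)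
      refine IsUnit.of_mul_eq_one (Ideal.Quotient.mk I x) ?_
      rw [← map_mul, ← map_one (Ideal.Quotient.mk I)]
      exact (hmkeq _ _).mpr ⟨-y, by linear_combination hxy⟩
    haveI : Nontrivial (Polynomial F ⧸ I) := Ideal.Quotient.nontrivial_iff.mpr (by
      rw [hI, Ne, Ideal.span_singleton_eq_top]
      intro hu
      exact hirr.not_isUnit (isUnit_of_dvd_unit (dvd_pow_self p (by omega)) hu))
    set ρ : F →+* Polynomial F ⧸ I := (Ideal.Quotient.mk I).comp Polynomial.C with hρ
    have hρinj : Function.Injective ρ := ρ.injective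
    set Z : Subgroup (Polynomial F ⧸ I)ˣ := (Units.map ρ.toMonoidHom).range with hZ
    set Φ : {f : Polynomial F // f.Monic ∧ IsCoprime f p} → (Polynomial F ⧸ I)ˣ :=
      fun s => (hU s).unit with hΦ
    have hΦspec : ∀ s, (Φ s : Polynomial F ⧸ I) = Ideal.Quotient.mk I s.1 :=
      fun s => (hU s).unit_spec
    have hρu : ∀ u : Fˣ, ((Units.map ρ.toMonoidHom u : (Polynomial F ⧸ I)ˣ) : Polynomial F ⧸ I)
        = Ideal.Quotient.mk I (Polynomial.C (u : F)) := fun u => rfl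
    have key : ∀ a b, sameCuspRel F p r i a b ↔
        (QuotientGroup.mk (s := Z) (Φ a) = QuotientGroup.mk (Φ b)) := by
      intro a b
      rw [sameCuspRel_iff F p hirr r i hi, QuotientGroup.eq]
      constructor
      · rintro ⟨u, hdvd⟩
        rw [← hm] at hdvd
        have hw : Φ a = Units.map ρ.toMonoidHom u * Φ b := by
          apply Units.ext
          rw [Units.val_mul, hΦspec, hΦspec, hρu, ← map_mul]
          exact (hmkeq _ _).mpr hdvd
        refine ⟨u⁻¹, ?_⟩
        rw [map_inv, eq_inv_mul_iff_mul_eq, hw, mul_comm (Units.map ρ.toMonoidHom u) (Φ b),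
          mul_assoc, mul_inv_cancel, mul_one]
      · rintro ⟨u, hu⟩
        refine ⟨u⁻¹, ?_⟩
        rw [← hm]
        have hab : Φ a * Units.map ρ.toMonoidHom u = Φ b := by
          rw [hu, ← mul_assoc, mul_inv_cancel, one_mul]
        have hval : Ideal.Quotient.mk I (a.1 * Polynomial.C (u : F))
            = Ideal.Quotient.mk I b.1 := by
          rw [map_mul, ← hρu, ← hΦspec, ← hΦspec, ← Units.val_mul, hab]
        have hdvd := (hmkeq _ _).mp hval
        have hCinv : Polynomial.C ((u : F))⁻¹ * Polynomial.C ((u : F)) = 1 := by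
          rw [← Polynomial.C_mul, inv_mul_cancel₀ u.ne_zero, Polynomial.C_1]
        have h2 := hdvd.mul_left (Polynomial.C ((u : F))⁻¹)
        have hrw : Polynomial.C ((u : F))⁻¹ * (a.1 * Polynomial.C (u : F) - b.1)
            = a.1 - Polynomial.C ((u⁻¹ : Fˣ) : F) * b.1 := by
          rw [Units.val_inv_eq_inv_val]
          linear_combination a.1 * hCinv
        rwa [hrw] at h2
    have hbij : Function.Bijective (Quot.lift (fun s => (QuotientGroup.mk (s := Z) (Φ s)))
        (fun a b hab => (key a b).mp hab)) := by
      constructor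
      · intro x y
        obtain ⟨s, rfl⟩ := Quot.exists_rep x
        obtain ⟨t, rfl⟩ := Quot.exists_rep y
        intro h
        exact Quot.sound ((key s t).mpr h)
      · intro z
        obtain ⟨v, rfl⟩ := QuotientGroup.mk_surjective z
        obtain ⟨w, hw⟩ := Ideal.Quotient.mk_surjective (v : Polynomial F ⧸ I)
        have hpw : ¬ p ∣ w := by
          rintro ⟨v0, rfl⟩
          have hu : IsUnit (Ideal.Quotient.mk I (p * v0)) := hw ▸ v.isUnit
          obtain ⟨z0, hz0⟩ := hu.exists_right_inv
          obtain ⟨y0, rfl⟩ := Ideal.Quotient.mk_surjective z0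
          have hdvd : p ^ m ∣ p * v0 * y0 - 1 := (hmkeq _ _).mp (by rw [map_one, map_mul, hz0])
          have h1 : p ∣ p * v0 * y0 - 1 := (dvd_pow_self p (by omega)).trans hdvd
          have h2 : p ∣ p * v0 * y0 := ⟨v0 * y0, by ring⟩
          exact hirr.not_isUnit (isUnit_of_dvd_one (by simpa using dvd_sub h2 h1))
        obtain ⟨f, hfm, hfc, hfd⟩ := exists_monic_rep hp hirr hm1 w hpw
        refine ⟨Quot.mk _ ⟨f, hfm, hfc⟩, ?_⟩
        show QuotientGroup.mk (Φ ⟨f, hfm, hfc⟩) = QuotientGroup.mk v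
        congr 1
        apply Units.ext
        rw [hΦspec, ← hw]
        exact (hmkeq _ _).mpr hfd
    have hcard1 : Nat.card (Quot (sameCuspRel F p r i))
        = Nat.card ((Polynomial F ⧸ I)ˣ ⧸ Z) := Nat.card_eq_of_bijective _ hbij
    have hinjU : Function.Injective (Units.map ρ.toMonoidHom) := Units.map_injective hρinj
    have hZcard : Nat.card Z = Fintype.card F - 1 := by
      have h1 : Nat.card Z = Nat.card Fˣ :=
        Nat.card_congr (MonoidHom.ofInjective hinjU).toEquiv.symm
      rw [h1, Nat.card_units, Nat.card_eq_fintype_card]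
    have hQU : Nat.card (Polynomial F ⧸ I)ˣ = (Fintype.card F ^ p.natDegree) ^ (m - 1) *
        (Fintype.card F ^ p.natDegree - 1) := natCard_units_polyQuot hp hirr m hm1
    have hlag := Subgroup.card_eq_card_quotient_mul_card_subgroup Z
    have hq2 : 2 ≤ Fintype.card F := Fintype.one_lt_card
    rw [hcard1]
    have heq : (Fintype.card F ^ p.natDegree) ^ (m - 1) * (Fintype.card F ^ p.natDegree - 1)
        = Nat.card ((Polynomial F ⧸ I)ˣ ⧸ Z) * (Fintype.card F - 1) := by
      rw [← hZcard, ← hlag]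
      exact hQU.symm
    rw [heq, Nat.mul_div_cancel _ (by omega : 0 < Fintype.card F - 1)]
end

section
/- Let q ≥ 2 be an integer and work with Λ(r) for P = q (i.e., 𝔭 = T, level 𝔫 = T^r). Let r ≥ 4 and 1 ≤ i ≤ r−3, and set m = min(i, r−i). Letting e_0, …, e_r denote the standard basis of ℚ^{r+1}, one has Λ(r)·( −q^m·e_{i−1} + q^{m−1}(q²+1)·e_i − q^m·e_{i+1} + q^{m−1}(q−1)·e_{r−1} − q^m(q−1)·e_r ) = q^{r−1}(q²−1)(q−1)·( e_i − q^{m−1}·e_r ). (In the paper: the exponent vector r_d of g(C_i) for the divisor C_i = (P_{T^i}) − deg(P_{T^i})·[∞] on X₀(T^r), for 1 ≤ i < r−2.) -/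
/-- The standard basis vector `e_i` of `ℚ^{r+1}` scaled by `c`. -/
def basisVec (r : ℕ) (i : Fin (r + 1)) (c : ℚ) : Fin (r + 1) → ℚ := Pi.single i c

/-- For `𝔭 = T` (so `P = q`, `e = 1`), `r ≥ 4`, `1 ≤ i ≤ r−3`, and `m = min(i, r−i)`:
`Λ(r)·(−q^m e_{i−1} + q^{m−1}(q²+1) e_i − q^m e_{i+1} + q^{m−1}(q−1) e_{r−1}
− q^m(q−1) e_r) = q^{r−1}(q²−1)(q−1)·(e_i − q^{m−1} e_r)`:
the exponent vector of `g(C_i)` on `X₀(T^r)`. -/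
theorem g_of_C_i (q : ℕ) (hq : 2 ≤ q) (r i : ℕ) (hr : 4 ≤ r)
    (hi1 : 1 ≤ i) (hi2 : i ≤ r - 3) :
    (lambdaMat q 1 r).mulVec
        (basisVec r ⟨i - 1, by omega⟩ (-(q : ℚ) ^ min i (r - i)) +
          basisVec r ⟨i, by omega⟩
            ((q : ℚ) ^ (min i (r - i) - 1) * ((q : ℚ) ^ 2 + 1)) +
          basisVec r ⟨i + 1, by omega⟩ (-(q : ℚ) ^ min i (r - i)) +
          basisVec r ⟨r - 1, by omega⟩
            ((q : ℚ) ^ (min i (r - i) - 1) * ((q : ℚ) - 1)) +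
          basisVec r ⟨r, by omega⟩ (-((q : ℚ) ^ min i (r - i) * ((q : ℚ) - 1)))) =
      ((q : ℚ) ^ (r - 1) * ((q : ℚ) ^ 2 - 1) * ((q : ℚ) - 1)) •
        (basisVec r ⟨i, by omega⟩ 1 -
          basisVec r ⟨r, by omega⟩ ((q : ℚ) ^ (min i (r - i) - 1))) := by
  obtain ⟨m', hm'⟩ : ∃ m', min i (r - i) = m' + 1 := ⟨min i (r - i) - 1, by omega⟩
  funext k
  obtain ⟨k, hk⟩ := k
  simp only [basisVec, Matrix.mulVec_add, Matrix.mulVec_single, lambdaMat,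
    Matrix.transpose_apply, Pi.add_apply, Pi.smul_apply, Pi.sub_apply, smul_eq_mul,
    Pi.single_apply, lambdaT, pow_one, Fin.mk.injEq, hm', Nat.add_sub_cancel, Nat.dist,
    Matrix.col_apply, op_smul_eq_mul]
  rcases Nat.eq_zero_or_pos k with rfl | hk1
  · have h1 : ((0:ℕ) = r) = False := by simp; omega
    have h2 : ((0:ℕ) = i) = False := by simp; omega
    simp only [h1, h2, eq_self_iff_true, if_true, if_false]
    rw [show r - (i - 1) = r - (i + 1) + 2 from by omega,
      show r - i = r - (i + 1) + 1 from by omega,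
      show r - (r - 1) = 1 from by omega, show r - r = 0 from by omega]
    ring
  · have hk0 : (k = 0) = False := by simp; omega
    by_cases hkr : k = r
    · have h1 : (k = i) = False := by simp; omega
      have h2 : (k = r) = True := by simp [hkr]
      simp only [hk0, h1, h2, if_true, if_false]
      obtain ⟨j, rfl⟩ : ∃ j, i = j + 1 := ⟨i - 1, by omega⟩
      obtain ⟨t, rfl⟩ : ∃ t, r = t + 4 := ⟨r - 4, by omega⟩
      rw [show j + 1 - 1 = j from by omega, show t + 4 - 1 = t + 3 from by omega]
      ring
    · have h2 : (k = r) = False := by simp [hkr]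
      simp only [hk0, h2, if_false]
      rcases lt_trichotomy k i with hki | rfl | hki
      · have h1 : (k = i) = False := by simp; omega
        simp only [h1, if_false]
        obtain ⟨a, b, hE1, hE2, hE3, hE4, hE5⟩ : ∃ a b,
            r - (k ⊓ (r - k) + (i - 1 - k + (k - (i - 1)))) = a + 2 ∧
            r - (k ⊓ (r - k) + (i - k + (k - i))) = a + 1 ∧
            r - (k ⊓ (r - k) + (i + 1 - k + (k - (i + 1)))) = a ∧
            r - (k ⊓ (r - k) + (r - 1 - k + (k - (r - 1)))) = b + 1 ∧
            r - (k ⊓ (r - k) + (r - k + (k - r))) = b :=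
          ⟨r - (k ⊓ (r - k) + (i + 1 - k)), k - k ⊓ (r - k),
            by omega, by omega, by omega, by omega, by omega⟩
        rw [hE1, hE2, hE3, hE4, hE5]
        ring
      · have h1 : (k = k) = True := by simp
        simp only [h1, if_true]
        obtain ⟨e, c, hE1, hE2, hE3, hE4, hE5, hR⟩ : ∃ e c,
            r - (k ⊓ (r - k) + (k - 1 - k + (k - (k - 1)))) = e ∧
            r - (k ⊓ (r - k) + (k - k + (k - k))) = e + 1 ∧
            r - (k ⊓ (r - k) + (k + 1 - k + (k - (k + 1)))) = e ∧
            r - (k ⊓ (r - k) + (r - 1 - k + (k - (r - 1)))) = c + 1 ∧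
            r - (k ⊓ (r - k) + (r - k + (k - r))) = c ∧
            r - 1 = e + m' + 1 :=
          ⟨r - m' - 2, k - m' - 1, by omega, by omega, by omega, by omega, by omega, by omega⟩
        rw [hE1, hE2, hE3, hE4, hE5, hR]
        ring
      · have h1 : (k = i) = False := by simp; omega
        simp only [h1, if_false]
        obtain ⟨a, b, hE1, hE2, hE3, hE4, hE5⟩ : ∃ a b,
            r - (k ⊓ (r - k) + (i - 1 - k + (k - (i - 1)))) = a ∧
            r - (k ⊓ (r - k) + (i - k + (k - i))) = a + 1 ∧
            r - (k ⊓ (r - k) + (i + 1 - k + (k - (i + 1)))) = a + 2 ∧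
            r - (k ⊓ (r - k) + (r - 1 - k + (k - (r - 1)))) = b + 1 ∧
            r - (k ⊓ (r - k) + (r - k + (k - r))) = b :=
          ⟨r - (k ⊓ (r - k) + (k - i + 1)), k - k ⊓ (r - k),
            by omega, by omega, by omega, by omega, by omega⟩
        rw [hE1, hE2, hE3, hE4, hE5]
        ring
end

section
/- Let q ≥ 2 be an integer and work with Λ(r) for P = q (i.e., 𝔭 = T, level 𝔫 = T^r). Let r ≥ 4. Letting e_0, …, e_r denote the standard basis of ℚ^{r+1}, one has Λ(r)·( −q²·e_{r−3} + (q³+q)·e_{r−2} − q·e_{r−1} + (−q³+q²)·e_r ) = q^{r−1}(q²−1)(q−1)·( e_{r−2} − q·e_r ). (In the paper: the exponent vector r_d of g(C_{r−2}) for the divisor C_{r−2} = (P_{T^{r−2}}) − deg(P_{T^{r−2}})·[∞] on X₀(T^r).) -/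
/-- For `𝔭 = T` (so `P = q`, `e = 1`) and `r ≥ 4`:
`Λ(r)·(−q² e_{r−3} + (q³+q) e_{r−2} − q e_{r−1} + (−q³+q²) e_r)
= q^{r−1}(q²−1)(q−1)·(e_{r−2} − q e_r)`:
the exponent vector of `g(C_{r−2})` on `X₀(T^r)`. -/
theorem g_of_C_r_sub_two (q : ℕ) (hq : 2 ≤ q) (r : ℕ) (hr : 4 ≤ r) :
    (lambdaMat q 1 r).mulVec
        (basisVec r ⟨r - 3, by omega⟩ (-(q : ℚ) ^ 2) +
          basisVec r ⟨r - 2, by omega⟩ ((q : ℚ) ^ 3 + (q : ℚ)) +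
          basisVec r ⟨r - 1, by omega⟩ (-(q : ℚ)) +
          basisVec r ⟨r, by omega⟩ (-(q : ℚ) ^ 3 + (q : ℚ) ^ 2)) =
      ((q : ℚ) ^ (r - 1) * ((q : ℚ) ^ 2 - 1) * ((q : ℚ) - 1)) •
        (basisVec r ⟨r - 2, by omega⟩ 1 - basisVec r ⟨r, by omega⟩ (q : ℚ)) := by
  funext k
  obtain ⟨i, hi⟩ := k
  simp only [basisVec, Matrix.mulVec_add, Matrix.mulVec_single, Pi.add_apply, Pi.smul_apply,
    Pi.sub_apply, Pi.single_apply, lambdaMat, Matrix.transpose_apply, lambdaT, smul_eq_mul,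
    Fin.mk.injEq, pow_one, Matrix.col_apply, op_smul_eq_mul]
  by_cases h0 : i = 0
  · rw [if_pos h0, if_pos h0, if_pos h0, if_pos h0, if_neg (show ¬(i = r - 2) by omega),
      if_neg (show ¬(i = r) by omega), show r - (r - 3) = 3 by omega,
      show r - (r - 2) = 2 by omega, show r - (r - 1) = 1 by omega, Nat.sub_self]
    ring
  by_cases hR : i = r
  · rw [if_neg h0, if_neg h0, if_neg h0, if_neg h0, if_pos hR, if_pos hR, if_pos hR,
      if_pos hR, if_pos hR, if_neg (show ¬(i = r - 2) by omega)]
    obtain ⟨t, ht⟩ : ∃ t, r = t + 4 := ⟨r - 4, by omega⟩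
    subst ht
    rw [show t + 4 - 3 = t + 1 by omega, show t + 4 - 2 = t + 2 by omega,
      show t + 4 - 1 = t + 3 by omega]
    ring
  by_cases h2 : i = r - 2
  · subst h2
    rw [if_neg h0, if_neg h0, if_neg h0, if_neg h0, if_neg hR, if_neg hR, if_neg hR,
      if_neg hR, if_neg hR, if_pos rfl]
    obtain ⟨t, ht⟩ : ∃ t, r = t + 4 := ⟨r - 4, by omega⟩
    subst ht
    rw [show Nat.dist (t + 4 - 3) (t + 4 - 2) = 1 by simp only [Nat.dist]; omega,
      show Nat.dist (t + 4 - 2) (t + 4 - 2) = 0 by simp only [Nat.dist]; omega,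
      show Nat.dist (t + 4 - 1) (t + 4 - 2) = 1 by simp only [Nat.dist]; omega,
      show Nat.dist (t + 4) (t + 4 - 2) = 2 by simp only [Nat.dist]; omega,
      show t + 4 - ((t + 4 - 2) ⊓ (t + 4 - (t + 4 - 2)) + 1) = t + 1 by omega,
      show t + 4 - ((t + 4 - 2) ⊓ (t + 4 - (t + 4 - 2)) + 0) = t + 2 by omega,
      show t + 4 - ((t + 4 - 2) ⊓ (t + 4 - (t + 4 - 2)) + 2) = t by omega,
      show t + 4 - 1 = t + 3 by omega]
    ring
  by_cases h1 : i = r - 1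
  · subst h1
    rw [if_neg h0, if_neg h0, if_neg h0, if_neg h0, if_neg hR, if_neg hR, if_neg hR,
      if_neg hR, if_neg hR, if_neg h2]
    obtain ⟨t, ht⟩ : ∃ t, r = t + 4 := ⟨r - 4, by omega⟩
    subst ht
    rw [show Nat.dist (t + 4 - 3) (t + 4 - 1) = 2 by simp only [Nat.dist]; omega,
      show Nat.dist (t + 4 - 2) (t + 4 - 1) = 1 by simp only [Nat.dist]; omega,
      show Nat.dist (t + 4 - 1) (t + 4 - 1) = 0 by simp only [Nat.dist]; omega,
      show Nat.dist (t + 4) (t + 4 - 1) = 1 by simp only [Nat.dist]; omega,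
      show t + 4 - ((t + 4 - 1) ⊓ (t + 4 - (t + 4 - 1)) + 2) = t + 1 by omega,
      show t + 4 - ((t + 4 - 1) ⊓ (t + 4 - (t + 4 - 1)) + 1) = t + 2 by omega,
      show t + 4 - ((t + 4 - 1) ⊓ (t + 4 - (t + 4 - 1)) + 0) = t + 3 by omega]
    ring
  · rw [if_neg h0, if_neg h0, if_neg h0, if_neg h0, if_neg hR, if_neg hR, if_neg hR,
      if_neg hR, if_neg hR, if_neg h2,
      show Nat.dist (r - 3) i = r - 3 - i by simp only [Nat.dist]; omega,
      show Nat.dist (r - 2) i = r - 2 - i by simp only [Nat.dist]; omega,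
      show Nat.dist (r - 1) i = r - 1 - i by simp only [Nat.dist]; omega,
      show Nat.dist r i = r - i by simp only [Nat.dist]; omega,
      show r - (i ⊓ (r - i) + (r - 3 - i)) = (i - i ⊓ (r - i)) + 3 by omega,
      show r - (i ⊓ (r - i) + (r - 2 - i)) = (i - i ⊓ (r - i)) + 2 by omega,
      show r - (i ⊓ (r - i) + (r - 1 - i)) = (i - i ⊓ (r - i)) + 1 by omega,
      show r - (i ⊓ (r - i) + (r - i)) = i - i ⊓ (r - i) by omega]
    ring
end

section
/- Let q ≥ 2 be an integer and work with Λ(r) for P = q (i.e., 𝔭 = T, level 𝔫 = T^r). Let r ≥ 4 and let i be an integer with ⌊(r+1)/2⌋ ≤ i ≤ r−2. Letting e_0, …, e_r denote the standard basis of ℚ^{r+1}, one has Λ(r)·( −q^{r−i}·e_{i−1} + q^{r−i−1}(q²+q+1)·e_i − q^{r−i−1}(q²+q+1)·e_{i+1} + q^{r−i}·e_{i+2} ) = q^{r−1}(q²−1)(q−1)·( e_i − q·e_{i+1} ). (In the paper: the exponent vector of g(C_i − qC_{i+1}) on X₀(T^r) for ⌊(r−1)/2⌋ + 1 ≤ i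 ≤ r−2.) -/
/-- For `𝔭 = T` (so `P = q`, `e = 1`), `r ≥ 4`, and `⌊(r+1)/2⌋ ≤ i ≤ r−2`:
`Λ(r)·(−q^{r−i} e_{i−1} + q^{r−i−1}(q²+q+1) e_i − q^{r−i−1}(q²+q+1) e_{i+1}
+ q^{r−i} e_{i+2}) = q^{r−1}(q²−1)(q−1)·(e_i − q e_{i+1})`:
the exponent vector of `g(C_i − q C_{i+1})` on `X₀(T^r)`. -/
theorem g_of_C_i_sub_q_C_i_add_one (q : ℕ) (hq : 2 ≤ q) (r i : ℕ) (hr : 4 ≤ r)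
    (hi1 : (r + 1) / 2 ≤ i) (hi2 : i ≤ r - 2) :
    (lambdaMat q 1 r).mulVec
        (basisVec r ⟨i - 1, by omega⟩ (-(q : ℚ) ^ (r - i)) +
          basisVec r ⟨i, by omega⟩
            ((q : ℚ) ^ (r - i - 1) * ((q : ℚ) ^ 2 + (q : ℚ) + 1)) +
          basisVec r ⟨i + 1, by omega⟩
            (-((q : ℚ) ^ (r - i - 1) * ((q : ℚ) ^ 2 + (q : ℚ) + 1))) +
          basisVec r ⟨i + 2, by omega⟩ ((q : ℚ) ^ (r - i))) =
      ((q : ℚ) ^ (r - 1) * ((q : ℚ) ^ 2 - 1) * ((q : ℚ) - 1)) •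
        (basisVec r ⟨i, by omega⟩ 1 - basisVec r ⟨i + 1, by omega⟩ (q : ℚ)) := by
  funext k
  obtain ⟨n, hn⟩ := k
  simp only [Matrix.mulVec_add, Matrix.mulVec_single, basisVec, Pi.add_apply,
    Pi.smul_apply, Pi.sub_apply, Pi.single_apply, smul_eq_mul,
    lambdaMat, Matrix.transpose_apply, lambdaT, pow_one, Fin.mk.injEq,
    Matrix.col_apply, op_smul_eq_mul]
  obtain ⟨s, hs⟩ : ∃ s, r = i + 2 + s := ⟨r - i - 2, by omega⟩
  subst hs
  obtain ⟨t, ht⟩ : ∃ t, i = t + 2 := ⟨i - 2, by omega⟩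
  subst ht
  have hst : s ≤ t := by omega
  simp only [Nat.dist]
  rcases eq_or_ne n 0 with h0 | h0
  · subst h0
    rw [if_pos rfl, if_pos rfl, if_pos rfl, if_pos rfl,
        if_neg (show ¬(0 = t + 2) by omega), if_neg (show ¬(0 = t + 2 + 1) by omega)]
    rw [show t + 2 + 2 + s - (t + 2) - 1 = s + 1 by omega,
        show t + 2 + 2 + s - (t + 2 - 1) = s + 3 by omega,
        show t + 2 + 2 + s - (t + 2 + 1) = s + 1 by omega,
        show t + 2 + 2 + s - (t + 2 + 2) = s by omega,
        show t + 2 + 2 + s - (t + 2) = s + 2 by omega]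
    ring
  rcases eq_or_ne n (t + 2 + 2 + s) with hR | hR
  · subst hR
    rw [if_neg h0, if_neg h0, if_neg h0, if_neg h0, if_pos rfl, if_pos rfl, if_pos rfl, if_pos rfl,
        if_neg (show ¬(t + 2 + 2 + s = t + 2) by omega),
        if_neg (show ¬(t + 2 + 2 + s = t + 2 + 1) by omega)]
    rw [show t + 2 + 2 + s - (t + 2) - 1 = s + 1 by omega,
        show t + 2 + 2 + s - (t + 2) = s + 2 by omega,
        show t + 2 - 1 = t + 1 by omega]
    ring
  simp only [if_neg h0, if_neg hR]
  rcases eq_or_ne n (t + 2) with hb | hb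
  · subst hb
    rw [if_pos rfl, if_neg (show ¬(t + 2 = t + 2 + 1) by omega)]
    rw [show t + 2 + 2 + s - ((t + 2) ⊓ (t + 2 + 2 + s - (t + 2)) + (t + 2 - 1 - (t + 2) + (t + 2 - (t + 2 - 1)))) = t + 1 by omega,
        show t + 2 + 2 + s - ((t + 2) ⊓ (t + 2 + 2 + s - (t + 2)) + (t + 2 - (t + 2) + (t + 2 - (t + 2)))) = t + 2 by omega,
        show t + 2 + 2 + s - ((t + 2) ⊓ (t + 2 + 2 + s - (t + 2)) + (t + 2 + 1 - (t + 2) + (t + 2 - (t + 2 + 1)))) = t + 1 by omega,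
        show t + 2 + 2 + s - ((t + 2) ⊓ (t + 2 + 2 + s - (t + 2)) + (t + 2 + 2 - (t + 2) + (t + 2 - (t + 2 + 2)))) = t by omega,
        show t + 2 + 2 + s - (t + 2) - 1 = s + 1 by omega,
        show t + 2 + 2 + s - (t + 2) = s + 2 by omega,
        show t + 2 + 2 + s - 1 = t + s + 3 by omega]
    ring
  rcases eq_or_ne n (t + 3) with hc | hc
  · subst hc
    rw [if_neg (show ¬(t + 3 = t + 2) by omega), if_pos (show t + 3 = t + 2 + 1 by omega)]
    rw [show t + 2 + 2 + s - ((t + 3) ⊓ (t + 2 + 2 + s - (t + 3)) + (t + 2 - 1 - (t + 3) + (t + 3 - (t + 2 - 1)))) = t + 1 by omega,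
        show t + 2 + 2 + s - ((t + 3) ⊓ (t + 2 + 2 + s - (t + 3)) + (t + 2 - (t + 3) + (t + 3 - (t + 2)))) = t + 2 by omega,
        show t + 2 + 2 + s - ((t + 3) ⊓ (t + 2 + 2 + s - (t + 3)) + (t + 2 + 1 - (t + 3) + (t + 3 - (t + 2 + 1)))) = t + 3 by omega,
        show t + 2 + 2 + s - ((t + 3) ⊓ (t + 2 + 2 + s - (t + 3)) + (t + 2 + 2 - (t + 3) + (t + 3 - (t + 2 + 2)))) = t + 2 by omega,
        show t + 2 + 2 + s - (t + 2) - 1 = s + 1 by omega,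
        show t + 2 + 2 + s - (t + 2) = s + 2 by omega,
        show t + 2 + 2 + s - 1 = t + s + 3 by omega]
    ring
  rw [if_neg (fun h => hb (by omega)), if_neg (fun h => hc (by omega))]
  rcases le_or_gt n (t + 1) with ha | ha
  · obtain ⟨E, h1, h2, h3, h4⟩ : ∃ E,
        t + 2 + 2 + s - (n ⊓ (t + 2 + 2 + s - n) + (t + 2 - 1 - n + (n - (t + 2 - 1)))) = E + 3 ∧
        t + 2 + 2 + s - (n ⊓ (t + 2 + 2 + s - n) + (t + 2 - n + (n - (t + 2)))) = E + 2 ∧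
        t + 2 + 2 + s - (n ⊓ (t + 2 + 2 + s - n) + (t + 2 + 1 - n + (n - (t + 2 + 1)))) = E + 1 ∧
        t + 2 + 2 + s - (n ⊓ (t + 2 + 2 + s - n) + (t + 2 + 2 - n + (n - (t + 2 + 2)))) = E := by
      refine ⟨t + 2 + 2 + s - (n ⊓ (t + 2 + 2 + s - n) + (t + 2 + 2 - n + (n - (t + 2 + 2)))),
        ?_, ?_, ?_, rfl⟩ <;> omega
    rw [h1, h2, h3, h4,
        show t + 2 + 2 + s - (t + 2) - 1 = s + 1 by omega,
        show t + 2 + 2 + s - (t + 2) = s + 2 by omega]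
    ring
  · have hd : t + 4 ≤ n := by omega
    rw [show t + 2 + 2 + s - (n ⊓ (t + 2 + 2 + s - n) + (t + 2 - 1 - n + (n - (t + 2 - 1)))) = t + 1 by omega,
        show t + 2 + 2 + s - (n ⊓ (t + 2 + 2 + s - n) + (t + 2 - n + (n - (t + 2)))) = t + 2 by omega,
        show t + 2 + 2 + s - (n ⊓ (t + 2 + 2 + s - n) + (t + 2 + 1 - n + (n - (t + 2 + 1)))) = t + 3 by omega,
        show t + 2 + 2 + s - (n ⊓ (t + 2 + 2 + s - n) + (t + 2 + 2 - n + (n - (t + 2 + 2)))) = t + 4 by omega,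
        show t + 2 + 2 + s - (t + 2) - 1 = s + 1 by omega,
        show t + 2 + 2 + s - (t + 2) = s + 2 by omega]
    ring
end
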